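/- arXiv:1403.1396 — 6 statements merged into one kernel-verified Lean document; each statement's English description precedes it below -/
import Mathlib

section
/- Let Λ be a discrete index set, separated by a K-admissible index distance ω with constants C_T, C_Λ, C_ω. Let A ∈ 𝓑_{N+L} with L ≥ max(2N·log_{C_Λ}(C_T), 2K), and let B ∈ 𝓑_N. Then the matrix product AB belongs to 𝓑_N, with ‖AB‖_{𝓑_N} ≤ (1 + C_ω) ‖A‖_{𝓑_{N+L}} ‖B‖_{𝓑_N}. -/
/-!
For every intermediate index `λ''` one has the weight inequality
`ω(λ,λ')^N ≤ ω(λ,λ'')^(N+L-K) · ω(λ'',λ')^N`: for `λ'' = λ` it is trivial, and otherwise the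
triangle inequality produces a factor `C_T^N`, which is absorbed into `ω(λ,λ'')^(L-K)` because
`ω(λ,λ'') ≥ C_Λ` and `L - K ≥ N · log_{C_Λ} C_T`.  Hence each term of `(AB)_{λ,λ'}` is bounded
by `‖A‖ ‖B‖ ω(λ,λ')^(-N) ω(λ,λ'')^(-K)`, and `K`-admissibility sums these bounds to `C_ω`.
-/

open Real

theorem Real.rpow_le_rpow_of_mul_logb_le {b c x N M : ℝ} (hb : 1 < b) (hc : 0 < c)
    (hbx : b ≤ x) (hM : 0 ≤ M) (h : N * logb b c ≤ M) : c ^ N ≤ x ^ M :=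
  calc c ^ N = b ^ (N * logb b c) := by
        rw [mul_comm, rpow_mul (by positivity), rpow_logb (by positivity) hb.ne' hc]
    _ ≤ b ^ M := rpow_le_rpow_of_exponent_le hb.le h
    _ ≤ x ^ M := rpow_le_rpow (by positivity) hbx hM

theorem Real.rpow_neg_add_mul_rpow_neg_le {x y z N L K : ℝ} (hx : 0 < x) (hy : 0 < y)
    (hz : 0 < z) (h : z ^ N ≤ x ^ (N + (L - K)) * y ^ N) :
    x ^ (-(N + L)) * y ^ (-N) ≤ z ^ (-N) * x ^ (-K) := by
  have hsplit : x ^ (N + L) = x ^ (N + (L - K)) * x ^ K := by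
    rw [← rpow_add hx]; ring_nf
  rw [rpow_neg hx.le, rpow_neg hy.le, rpow_neg hz.le, rpow_neg hx.le, hsplit, ← mul_inv,
    ← mul_inv]
  refine inv_anti₀ (by positivity) ?_
  calc z ^ N * x ^ K ≤ x ^ (N + (L - K)) * y ^ N * x ^ K := by gcongr
    _ = x ^ (N + (L - K)) * x ^ K * y ^ N := by ring

theorem norm_mul_le_of_rpow_neg_bounds {R : Type*} [NonUnitalSeminormedRing R] {a b : R}
    {x y z CA CB N L K : ℝ} (hx : 0 < x) (hy : 0 < y) (hz : 0 < z)
    (ha : ‖a‖ ≤ CA * x ^ (-(N + L))) (hb : ‖b‖ ≤ CB * y ^ (-N))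
    (h : z ^ N ≤ x ^ (N + (L - K)) * y ^ N) :
    ‖a * b‖ ≤ CA * CB * z ^ (-N) * x ^ (-K) := by
  have hCA : 0 ≤ CA := nonneg_of_mul_nonneg_left ((norm_nonneg _).trans ha) (by positivity)
  have hCB : 0 ≤ CB := nonneg_of_mul_nonneg_left ((norm_nonneg _).trans hb) (by positivity)
  calc ‖a * b‖ ≤ (CA * x ^ (-(N + L))) * (CB * y ^ (-N)) :=
        (norm_mul_le a b).trans (mul_le_mul ha hb (norm_nonneg _) ((norm_nonneg _).trans ha))
    _ = CA * CB * (x ^ (-(N + L)) * y ^ (-N)) := by ring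
    _ ≤ CA * CB * (z ^ (-N) * x ^ (-K)) :=
        mul_le_mul_of_nonneg_left (rpow_neg_add_mul_rpow_neg_le hx hy hz h) (mul_nonneg hCA hCB)
    _ = CA * CB * z ^ (-N) * x ^ (-K) := by ring

section IndexDistance

variable {Λ : Type*} {ω : Λ → Λ → ℝ} {C_T C_Λ N M : ℝ}

theorem rpow_index_distance_le_of_separated (hω1 : ∀ l l' : Λ, 1 ≤ ω l l')
    (htri : ∀ l l' l'' : Λ, ω l l' ≤ C_T * ω l l'' * ω l'' l') (hCT : 0 < C_T)
    (hCΛ : 1 < C_Λ) (hsep : ∀ l l' : Λ, l ≠ l' → C_Λ ≤ ω l l') (hN : 0 ≤ N) (hM : 0 ≤ M)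
    (hlog : N * logb C_Λ C_T ≤ M) (l l' l'' : Λ) :
    ω l l' ^ N ≤ ω l l'' ^ (N + M) * ω l'' l' ^ N := by
  have hpos : ∀ a b : Λ, 0 < ω a b := fun a b => one_pos.trans_le (hω1 a b)
  have hll'' := hpos l l''
  have hl''l' := hpos l'' l'
  obtain rfl | hne := eq_or_ne l'' l
  · calc ω l'' l' ^ N = 1 * ω l'' l' ^ N := (one_mul _).symm
      _ ≤ ω l'' l'' ^ (N + M) * ω l'' l' ^ N := by
        gcongr
        exact one_le_rpow (hω1 l'' l'') (by positivity)
  · have hCT_le : C_T ^ N ≤ ω l l'' ^ M :=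
      rpow_le_rpow_of_mul_logb_le hCΛ hCT (hsep l l'' hne.symm) hM hlog
    calc ω l l' ^ N ≤ (C_T * ω l l'' * ω l'' l') ^ N :=
          rpow_le_rpow (hpos l l').le (htri l l' l'') hN
      _ = C_T ^ N * ω l l'' ^ N * ω l'' l' ^ N := by
          rw [mul_rpow (by positivity) hl''l'.le, mul_rpow hCT.le hll''.le]
      _ ≤ ω l l'' ^ M * ω l l'' ^ N * ω l'' l' ^ N := by gcongr
      _ = ω l l'' ^ (N + M) * ω l'' l' ^ N := by rw [rpow_add hll'', mul_comm (_ ^ M)]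

end IndexDistance

theorem stmt_1_general {Λ : Type*} (ω : Λ → Λ → ℝ)
    (C_T C_Λ C_ω K N L : ℝ)
    (hω1 : ∀ l l' : Λ, 1 ≤ ω l l')
    (hCT : 1 ≤ C_T)
    (htri : ∀ l l' l'' : Λ, ω l l' ≤ C_T * ω l l'' * ω l'' l')
    (hCΛ : 1 < C_Λ) (hsep : ∀ l l' : Λ, l ≠ l' → C_Λ ≤ ω l l')
    (hadm : ∀ l : Λ, Summable (fun l' : Λ => ω l l' ^ (-K)) ∧
      ∑' l' : Λ, ω l l' ^ (-K) ≤ C_ω)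
    (hN : 1 ≤ N)
    (hL : max (2 * N * Real.logb C_Λ C_T) (2 * K) ≤ L)
    (A B : Λ → Λ → ℂ) (CA CB : ℝ)
    (hA : ∀ l l' : Λ, ‖A l l'‖ ≤ CA * ω l l' ^ (-(N + L)))
    (hB : ∀ l l' : Λ, ‖B l l'‖ ≤ CB * ω l l' ^ (-N)) :
    ∀ l l' : Λ, Summable (fun l'' : Λ => A l l'' * B l'' l') ∧
      ‖∑' l'' : Λ, A l l'' * B l'' l'‖ ≤
        (1 + C_ω) * CA * CB * ω l l' ^ (-N) := by
  intro l l'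
  have hpos : ∀ a b : Λ, 0 < ω a b := fun a b => one_pos.trans_le (hω1 a b)
  obtain ⟨hL_log, hL_K⟩ := max_le_iff.mp hL
  have hlog : N * logb C_Λ C_T ≤ L - K := by linarith
  have hLK : 0 ≤ L - K := (mul_nonneg (by linarith) (logb_nonneg hCΛ hCT)).trans hlog
  set c := CA * CB * ω l l' ^ (-N)
  have hterm : ∀ l'', ‖A l l'' * B l'' l'‖ ≤ c * ω l l'' ^ (-K) := fun l'' =>
    norm_mul_le_of_rpow_neg_bounds (hpos l l'') (hpos l'' l') (hpos l l') (hA l l'') (hB l'' l')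
      (rpow_index_distance_le_of_separated hω1 htri (by linarith) hCΛ hsep (by linarith) hLK hlog
        l l' l'')
  have hc : 0 ≤ c :=
    nonneg_of_mul_nonneg_left ((norm_nonneg _).trans (hterm l)) (rpow_pos_of_pos (hpos l l) _)
  have hmajorant := (hadm l).1.mul_left c
  refine ⟨hmajorant.of_norm_bounded hterm, (tsum_of_norm_bounded hmajorant.hasSum hterm).trans ?_⟩
  calc ∑' l'', c * ω l l'' ^ (-K) = c * ∑' l'', ω l l'' ^ (-K) := tsum_mul_left
    _ ≤ c * C_ω := mul_le_mul_of_nonneg_left (hadm l).2 hc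
    _ ≤ (1 + C_ω) * c := by linarith
    _ = (1 + C_ω) * CA * CB * ω l l' ^ (-N) := by ring

/-- Submultiplicativity (Theorem 2.6): let `Λ` be separated (with constant `C_Λ > 1`) by a
`K`-admissible index distance `ω` (with constant `C_ω`), let `A ∈ 𝓑_{N+L}` with
`L ≥ max(2N·log_{C_Λ} C_T, 2K)` and `B ∈ 𝓑_N`.  Then `AB ∈ 𝓑_N` with
`‖AB‖_{𝓑_N} ≤ (1 + C_ω) ‖A‖_{𝓑_{N+L}} ‖B‖_{𝓑_N}`.  (The norms are expressed through
arbitrary localization constants `CA, CB` bounding `A` and `B`.) -/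
theorem stmt_1 {Λ : Type*} (ω : Λ → Λ → ℝ)
    (C_S C_T C_Λ C_ω K N L : ℝ)
    (hω1 : ∀ l l' : Λ, 1 ≤ ω l l')
    (hdiag : ∀ l : Λ, ω l l = 1)
    (hCS : 1 ≤ C_S) (hCT : 1 ≤ C_T)
    (hsym : ∀ l l' : Λ, ω l l' ≤ C_S * ω l' l)
    (htri : ∀ l l' l'' : Λ, ω l l' ≤ C_T * ω l l'' * ω l'' l')
    (hCΛ : 1 < C_Λ) (hsep : ∀ l l' : Λ, l ≠ l' → C_Λ ≤ ω l l')
    (hK : 1 ≤ K)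
    (hadm : ∀ l : Λ, Summable (fun l' : Λ => ω l l' ^ (-K)) ∧
      ∑' l' : Λ, ω l l' ^ (-K) ≤ C_ω)
    (hN : 1 ≤ N)
    (hL : max (2 * N * Real.logb C_Λ C_T) (2 * K) ≤ L)
    (A B : Λ → Λ → ℂ) (CA CB : ℝ)
    (hA : ∀ l l' : Λ, ‖A l l'‖ ≤ CA * ω l l' ^ (-(N + L)))
    (hB : ∀ l l' : Λ, ‖B l l'‖ ≤ CB * ω l l' ^ (-N)) :
    ∀ l l' : Λ, Summable (fun l'' : Λ => A l l'' * B l'' l') ∧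
      ‖∑' l'' : Λ, A l l'' * B l'' l'‖ ≤
        (1 + C_ω) * CA * CB * ω l l' ^ (-N) :=
  stmt_1_general ω C_T C_Λ C_ω K N L hω1 hCT htri hCΛ hsep hadm hN hL A B CA CB hA hB
end

section
/- Let Λ be a discrete index set, A ∈ ℂ^{Λ×Λ}, w₁, w₂ : Λ → (0,∞) weight functions, and p₀ ∈ (0,1]. Suppose there are C₁, C₂ > 0 such that Σ_{λ∈Λ} w₂(λ)^{p₀} |A_{λ,λ'}|^{p₀} ≤ C₁^{p₀} w₁(λ')^{p₀} for all λ' ∈ Λ, and Σ_{λ'∈Λ} |A_{λ,λ'}| w₁(λ')^{-1} ≤ C₂ w₂(λ)^{-1} for all λ ∈ Λ. Then the matrix operator (Aa)_λ := Σ_{λ'} A_{λ,λ'} a_{λ'} is bounded from ℓ^p_{w₁}(Λ) to ℓ^p_{w₂}(Λ) for all p ∈ [p₀,∞]; moreover its operator norm is at most C₁^{1/p} C₂^{1/p'} for p ∈ [1,∞] (where 1/p + 1/p' = 1 and 1/∞ = 0), and at most C₁ for p ∈ (p₀,1]. -/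
/-!
Conjugating by the diagonal weights, `M = D_{w₂} A D_{w₁}⁻¹`, turns the weighted problem into the
unweighted Schur test for `M`, whose columns have `ℓ^{p₀}`-norm at most `C₁` and whose rows have
`ℓ¹`-norm at most `C₂`. For `p ≤ 1`, the `p`-subadditivity `(∑ xᵢ)^p ≤ ∑ xᵢ^p` and an exchange of
summations bound `∑ᵢ |(Mx)ᵢ|^p` by the largest column sum `∑ᵢ |Mᵢₖ|^p ≤ C₁^p` (by `ℓ^{p₀} ⊆ ℓ^p`)
times `∑ₖ |xₖ|^p`. For `p ≥ 1`, Hölder's inequality with the weights `|Mᵢₖ|` along a row gives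
`|(Mx)ᵢ|^p ≤ C₂^{p-1} ∑ₖ |Mᵢₖ| |xₖ|^p`, and summing over `i` with the `ℓ¹` column bound yields
`C₂^{p-1} C₁`. The estimates are made in `ℝ≥0∞`, so that summability only has to be read off at
the end.
-/

open scoped ENNReal

namespace ENNReal

variable {ι : Type*}

theorem rpow_tsum_le_tsum_rpow (f : ι → ℝ≥0∞) {p : ℝ} (hp : 0 < p) (hp1 : p ≤ 1) :
    (∑' i, f i) ^ p ≤ ∑' i, f i ^ p := by
  have hfin (s : Finset ι) : (∑ i ∈ s, f i) ^ p ≤ ∑ i ∈ s, f i ^ p := by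
    induction s using Finset.cons_induction with
    | empty => simp [zero_rpow_of_pos hp]
    | cons a s ha ih =>
      rw [Finset.sum_cons, Finset.sum_cons]
      exact (rpow_add_le_add_rpow _ _ hp.le hp1).trans (by gcongr)
  rw [ENNReal.tsum_eq_iSup_sum]
  refine ((orderIsoRpow p hp).map_iSup _).trans_le (iSup_le fun s => ?_)
  exact (hfin s).trans (ENNReal.sum_le_tsum s)

theorem tsum_rpow_le_rpow_tsum_rpow (f : ι → ℝ≥0∞) {p q : ℝ} (hp : 0 < p) (hpq : p ≤ q) :
    ∑' i, f i ^ q ≤ (∑' i, f i ^ p) ^ (q / p) := by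
  have hq : 0 < q := hp.trans_le hpq
  rw [← inv_div, le_rpow_inv_iff (div_pos hp hq)]
  calc (∑' i, f i ^ q) ^ (p / q) ≤ ∑' i, (f i ^ q) ^ (p / q) :=
        rpow_tsum_le_tsum_rpow _ (div_pos hp hq) ((div_le_one hq).2 hpq)
    _ = ∑' i, f i ^ p := by simp only [← rpow_mul, mul_div_cancel₀ _ hq.ne']

theorem inner_le_weight_mul_Lp_tsum {p : ℝ} (hp : 1 ≤ p) (w f : ι → ℝ≥0∞) :
    ∑' i, w i * f i ≤ (∑' i, w i) ^ (1 - p⁻¹) * (∑' i, w i * f i ^ p) ^ p⁻¹ := by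
  have hq : 0 ≤ 1 - p⁻¹ := sub_nonneg.2 (inv_le_one_of_one_le₀ hp)
  rw [ENNReal.tsum_eq_iSup_sum]
  refine iSup_le fun s => (inner_le_weight_mul_Lp_of_nonneg s hp w f).trans ?_
  gcongr <;> exact ENNReal.sum_le_tsum s

variable {κ : Type*} (B : ι → κ → ℝ≥0∞) (b : κ → ℝ≥0∞)

theorem tsum_rpow_tsum_mul_le_of_le_one {p₀ p : ℝ} (hp₀ : 0 < p₀) (hp₀p : p₀ ≤ p)
    (hp1 : p ≤ 1) {C : ℝ≥0∞} (hcol : ∀ k, ∑' i, B i k ^ p₀ ≤ C ^ p₀) :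
    ∑' i, (∑' k, B i k * b k) ^ p ≤ C ^ p * ∑' k, b k ^ p := by
  have hp : 0 < p := hp₀.trans_le hp₀p
  have hcol_p (k : κ) : ∑' i, B i k ^ p ≤ C ^ p :=
    calc ∑' i, B i k ^ p ≤ (∑' i, B i k ^ p₀) ^ (p / p₀) :=
          ENNReal.tsum_rpow_le_rpow_tsum_rpow _ hp₀ hp₀p
      _ ≤ (C ^ p₀) ^ (p / p₀) := by gcongr; exact hcol k
      _ = C ^ p := by rw [← ENNReal.rpow_mul, mul_div_cancel₀ _ hp₀.ne']
  calc ∑' i, (∑' k, B i k * b k) ^ p ≤ ∑' i, ∑' k, (B i k * b k) ^ p :=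
        ENNReal.tsum_le_tsum fun i => ENNReal.rpow_tsum_le_tsum_rpow _ hp hp1
    _ = ∑' k, (∑' i, B i k ^ p) * b k ^ p := by
        simp only [ENNReal.mul_rpow_of_nonneg _ _ hp.le, ← ENNReal.tsum_mul_right]
        exact ENNReal.tsum_comm
    _ ≤ ∑' k, C ^ p * b k ^ p := by gcongr with k; exact hcol_p k
    _ = C ^ p * ∑' k, b k ^ p := ENNReal.tsum_mul_left

theorem tsum_rpow_tsum_mul_le_of_one_le {p : ℝ} (hp : 1 ≤ p) {C₁ C₂ : ℝ≥0∞}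
    (hcol : ∀ k, ∑' i, B i k ≤ C₁) (hrow : ∀ i, ∑' k, B i k ≤ C₂) :
    ∑' i, (∑' k, B i k * b k) ^ p ≤ C₂ ^ (p - 1) * C₁ * ∑' k, b k ^ p := by
  have hp0 : 0 < p := one_pos.trans_le hp
  have hq : 0 ≤ 1 - p⁻¹ := sub_nonneg.2 (inv_le_one_of_one_le₀ hp)
  have hrow_p (i : ι) : (∑' k, B i k * b k) ^ p ≤ C₂ ^ (p - 1) * ∑' k, B i k * b k ^ p :=
    calc (∑' k, B i k * b k) ^ p
        ≤ ((∑' k, B i k) ^ (1 - p⁻¹) * (∑' k, B i k * b k ^ p) ^ p⁻¹) ^ p := by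
          gcongr; exact ENNReal.inner_le_weight_mul_Lp_tsum hp _ _
      _ ≤ (C₂ ^ (1 - p⁻¹) * (∑' k, B i k * b k ^ p) ^ p⁻¹) ^ p := by gcongr; exact hrow i
      _ = C₂ ^ (p - 1) * ∑' k, B i k * b k ^ p := by
          rw [ENNReal.mul_rpow_of_nonneg _ _ hp0.le, ENNReal.rpow_inv_rpow hp0.ne',
            ← ENNReal.rpow_mul, sub_mul, inv_mul_cancel₀ hp0.ne', one_mul]
  calc ∑' i, (∑' k, B i k * b k) ^ p ≤ ∑' i, C₂ ^ (p - 1) * ∑' k, B i k * b k ^ p :=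
        ENNReal.tsum_le_tsum hrow_p
    _ = C₂ ^ (p - 1) * ∑' k, (∑' i, B i k) * b k ^ p := by
        rw [ENNReal.tsum_mul_left, ENNReal.tsum_comm]
        simp only [ENNReal.tsum_mul_right]
    _ ≤ C₂ ^ (p - 1) * ∑' k, C₁ * b k ^ p := by gcongr with k; exact hcol k
    _ = C₂ ^ (p - 1) * C₁ * ∑' k, b k ^ p := by rw [ENNReal.tsum_mul_left, mul_assoc]

theorem tsum_ofReal_rpow_eq {g : ι → ℝ} (hg : ∀ i, 0 ≤ g i) {p : ℝ} (hp : 0 ≤ p)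
    (hs : Summable fun i => g i ^ p) :
    ∑' i, ENNReal.ofReal (g i) ^ p = ENNReal.ofReal (∑' i, g i ^ p) := by
  rw [ENNReal.ofReal_tsum_of_nonneg (fun i => Real.rpow_nonneg (hg i) p) hs]
  exact tsum_congr fun i => ENNReal.ofReal_rpow_of_nonneg (hg i) hp

end ENNReal

section RealTransfer

variable {ι : Type*}

theorem summable_and_tsum_le_of_tsum_ofReal_le {g : ι → ℝ} (hg : ∀ i, 0 ≤ g i) {c : ℝ}
    (hc : 0 ≤ c) (h : ∑' i, ENNReal.ofReal (g i) ≤ ENNReal.ofReal c) :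
    Summable g ∧ ∑' i, g i ≤ c := by
  have hs : Summable g :=
    (ENNReal.summable_toReal (ne_top_of_le_ne_top ENNReal.ofReal_ne_top h)).congr
      fun i => ENNReal.toReal_ofReal (hg i)
  refine ⟨hs, ?_⟩
  rwa [← ENNReal.ofReal_le_ofReal_iff hc, ENNReal.ofReal_tsum_of_nonneg hg hs]

theorem summable_and_tsum_le_of_tsum_rpow_le {g : ι → ℝ} (hg : ∀ i, 0 ≤ g i) {p C : ℝ}
    (hp : 0 < p) (hp1 : p ≤ 1) (hC : 0 ≤ C)
    (h : Summable (fun i => g i ^ p) ∧ ∑' i, g i ^ p ≤ C ^ p) :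
    Summable g ∧ ∑' i, g i ≤ C := by
  refine summable_and_tsum_le_of_tsum_ofReal_le hg hC ?_
  calc ∑' i, ENNReal.ofReal (g i) = ∑' i, ENNReal.ofReal (g i) ^ (1 : ℝ) := by
        simp only [ENNReal.rpow_one]
    _ ≤ (∑' i, ENNReal.ofReal (g i) ^ p) ^ (1 / p) :=
        ENNReal.tsum_rpow_le_rpow_tsum_rpow _ hp hp1
    _ ≤ ENNReal.ofReal (C ^ p) ^ (1 / p) := by
        rw [ENNReal.tsum_ofReal_rpow_eq hg hp.le h.1]
        gcongr
        exact h.2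
    _ = ENNReal.ofReal C := by
        rw [ENNReal.ofReal_rpow_of_nonneg (by positivity) (by positivity), ← Real.rpow_mul hC,
          mul_one_div_cancel hp.ne', Real.rpow_one]

theorem tsum_enorm_le_ofReal {E : Type*} [SeminormedAddGroup E] {f : ι → E} {C : ℝ}
    (h : Summable (fun i => ‖f i‖) ∧ ∑' i, ‖f i‖ ≤ C) : ∑' i, ‖f i‖ₑ ≤ ENNReal.ofReal C := by
  simp only [← ofReal_norm]
  rw [← ENNReal.ofReal_tsum_of_nonneg (fun i => norm_nonneg _) h.1]
  exact ENNReal.ofReal_le_ofReal h.2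

end RealTransfer

section SchurTest

variable {ι κ 𝕜 : Type*} [NormedField 𝕜] [CompleteSpace 𝕜]

def MapsLpWithBound (M : ι → κ → 𝕜) (p K : ℝ) (x : κ → 𝕜) : Prop :=
  (∀ i, Summable fun k => M i k * x k) ∧ Summable (fun i => ‖∑' k, M i k * x k‖ ^ p) ∧
    (∑' i, ‖∑' k, M i k * x k‖ ^ p) ^ (1 / p) ≤ K * (∑' k, ‖x k‖ ^ p) ^ (1 / p)

theorem mapsLpWithBound_of_tsum_enorm_le (M : ι → κ → 𝕜) (x : κ → 𝕜) {p K : ℝ} (hp : 0 < p)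
    (hK : 0 ≤ K) (hx : Summable fun k => ‖x k‖ ^ p)
    (h : ∑' i, (∑' k, ‖M i k‖ₑ * ‖x k‖ₑ) ^ p ≤ ENNReal.ofReal K * ∑' k, ‖x k‖ₑ ^ p) :
    MapsLpWithBound M p (K ^ (1 / p)) x := by
  have hxE : ∑' k, ‖x k‖ₑ ^ p = ENNReal.ofReal (∑' k, ‖x k‖ ^ p) := by
    simpa only [ofReal_norm] using ENNReal.tsum_ofReal_rpow_eq (fun k => norm_nonneg (x k)) hp.le hx
  have hfin : ∑' i, (∑' k, ‖M i k‖ₑ * ‖x k‖ₑ) ^ p ≠ ∞ := by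
    refine ne_top_of_le_ne_top ?_ h
    rw [hxE, ← ENNReal.ofReal_mul hK]
    exact ENNReal.ofReal_ne_top
  -- each row series converges absolutely because the left-hand side of `h` is finite
  have hsum (i : ι) : Summable fun k => M i k * x k := by
    refine Summable.of_enorm fun htop => ENNReal.ne_top_of_tsum_ne_top hfin i ?_
    simp only [enorm_mul] at htop
    simp [htop, hp]
  have hy : ∑' i, ENNReal.ofReal (‖∑' k, M i k * x k‖ ^ p)
      ≤ ENNReal.ofReal (K * ∑' k, ‖x k‖ ^ p) :=
    calc ∑' i, ENNReal.ofReal (‖∑' k, M i k * x k‖ ^ p) = ∑' i, ‖∑' k, M i k * x k‖ₑ ^ p := by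
          simp only [← ofReal_norm, ENNReal.ofReal_rpow_of_nonneg (norm_nonneg _) hp.le]
      _ ≤ ∑' i, (∑' k, ‖M i k‖ₑ * ‖x k‖ₑ) ^ p := by
          gcongr with i
          simpa only [enorm_mul] using enorm_tsum_le_tsum_enorm (f := fun k => M i k * x k)
      _ ≤ _ := h
      _ = _ := by rw [hxE, ENNReal.ofReal_mul hK]
  obtain ⟨hys, hyle⟩ :=
    summable_and_tsum_le_of_tsum_ofReal_le (fun i => by positivity) (by positivity) hy
  refine ⟨hsum, hys, ?_⟩
  calc (∑' i, ‖∑' k, M i k * x k‖ ^ p) ^ (1 / p) ≤ (K * ∑' k, ‖x k‖ ^ p) ^ (1 / p) := by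
        gcongr
    _ = _ := Real.mul_rpow hK (tsum_nonneg fun k => by positivity)

theorem mapsLpWithBound_of_le_one (M : ι → κ → 𝕜) {p₀ p C : ℝ} (hp₀ : 0 < p₀) (hp₀p : p₀ ≤ p)
    (hp1 : p ≤ 1) (hC : 0 ≤ C)
    (hcol : ∀ k, Summable (fun i => ‖M i k‖ ^ p₀) ∧ ∑' i, ‖M i k‖ ^ p₀ ≤ C ^ p₀)
    (x : κ → 𝕜) (hx : Summable fun k => ‖x k‖ ^ p) : MapsLpWithBound M p C x := by
  have hp : 0 < p := hp₀.trans_le hp₀p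
  have hcolE (k : κ) : ∑' i, ‖M i k‖ₑ ^ p₀ ≤ ENNReal.ofReal C ^ p₀ := by
    simp only [← ofReal_norm]
    rw [ENNReal.tsum_ofReal_rpow_eq (fun i => norm_nonneg _) hp₀.le (hcol k).1,
      ENNReal.ofReal_rpow_of_nonneg hC hp₀.le]
    exact ENNReal.ofReal_le_ofReal (hcol k).2
  have h := mapsLpWithBound_of_tsum_enorm_le M x hp (Real.rpow_nonneg hC p) hx <| by
    rw [← ENNReal.ofReal_rpow_of_nonneg hC hp.le]
    exact ENNReal.tsum_rpow_tsum_mul_le_of_le_one _ _ hp₀ hp₀p hp1 hcolE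
  rwa [← Real.rpow_mul hC, mul_one_div_cancel hp.ne', Real.rpow_one] at h

theorem mapsLpWithBound_of_one_le (M : ι → κ → 𝕜) {p C₁ C₂ : ℝ} (hp : 1 ≤ p) (hC₁ : 0 ≤ C₁)
    (hC₂ : 0 ≤ C₂) (hcol : ∀ k, Summable (fun i => ‖M i k‖) ∧ ∑' i, ‖M i k‖ ≤ C₁)
    (hrow : ∀ i, Summable (fun k => ‖M i k‖) ∧ ∑' k, ‖M i k‖ ≤ C₂)
    (x : κ → 𝕜) (hx : Summable fun k => ‖x k‖ ^ p) :
    MapsLpWithBound M p (C₁ ^ (1 / p) * C₂ ^ (1 - 1 / p)) x := by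
  have hp0 : 0 < p := one_pos.trans_le hp
  have h := mapsLpWithBound_of_tsum_enorm_le M x hp0 (K := C₂ ^ (p - 1) * C₁) (by positivity) hx <| by
    rw [ENNReal.ofReal_mul (by positivity), ← ENNReal.ofReal_rpow_of_nonneg hC₂ (by linarith)]
    exact ENNReal.tsum_rpow_tsum_mul_le_of_one_le _ _ hp
      (fun k => tsum_enorm_le_ofReal (hcol k)) (fun i => tsum_enorm_le_ofReal (hrow i))
  rwa [Real.mul_rpow (by positivity) hC₁, ← Real.rpow_mul hC₂, sub_mul, one_mul,
    mul_one_div_cancel hp0.ne', mul_comm] at h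

theorem summable_mul_and_norm_tsum_le_of_norm_le (m x : κ → 𝕜) {C c : ℝ}
    (hm : Summable (fun k => ‖m k‖) ∧ ∑' k, ‖m k‖ ≤ C) (hc : 0 ≤ c) (hx : ∀ k, ‖x k‖ ≤ c) :
    Summable (fun k => m k * x k) ∧ ‖∑' k, m k * x k‖ ≤ C * c := by
  have hbound (k : κ) : ‖m k * x k‖ ≤ ‖m k‖ * c := by
    rw [norm_mul]
    gcongr
    exact hx k
  refine ⟨hm.1.mul_right c |>.of_norm_bounded hbound, ?_⟩
  calc ‖∑' k, m k * x k‖ ≤ (∑' k, ‖m k‖) * c :=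
        tsum_of_norm_bounded (hm.1.hasSum.mul_right c) hbound
    _ ≤ C * c := by gcongr; exact hm.2

end SchurTest

section Weights

variable {ι κ 𝕜 : Type*} [RCLike 𝕜] (A : ι → κ → 𝕜) {w₁ : κ → ℝ} {w₂ : ι → ℝ}

noncomputable def weightConj (w₁ : κ → ℝ) (w₂ : ι → ℝ) : ι → κ → 𝕜 :=
  fun i k => A i k * ((w₂ i / w₁ k : ℝ) : 𝕜)

theorem norm_mul_ofReal_of_nonneg (z : 𝕜) {r : ℝ} (hr : 0 ≤ r) : ‖z * (r : 𝕜)‖ = ‖z‖ * r := by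
  rw [norm_mul, RCLike.norm_ofReal, abs_of_nonneg hr]

theorem norm_weightConj (hw₁ : ∀ k, 0 ≤ w₁ k) (hw₂ : ∀ i, 0 ≤ w₂ i) (i : ι) (k : κ) :
    ‖weightConj A w₁ w₂ i k‖ = w₂ i * ‖A i k‖ / w₁ k := by
  rw [weightConj, norm_mul_ofReal_of_nonneg _ (div_nonneg (hw₂ i) (hw₁ k))]
  ring

theorem weightConj_mul_ofReal {i : ι} {k : κ} (hw₁ : w₁ k ≠ 0) (a : 𝕜) :
    weightConj A w₁ w₂ i k * (a * w₁ k) = A i k * a * w₂ i := by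
  have hw₁' : (w₁ k : 𝕜) ≠ 0 := RCLike.ofReal_ne_zero.2 hw₁
  simp only [weightConj, RCLike.ofReal_div]
  field_simp

theorem summable_weightConj_mul_iff {i : ι} (hw₁ : ∀ k, w₁ k ≠ 0) (hw₂ : w₂ i ≠ 0) (a : κ → 𝕜) :
    Summable (fun k => weightConj A w₁ w₂ i k * (a k * w₁ k)) ↔
      Summable (fun k => A i k * a k) := by
  simp only [weightConj_mul_ofReal A (hw₁ _)]
  exact summable_mul_right_iff (RCLike.ofReal_ne_zero.2 hw₂)

theorem norm_tsum_weightConj_mul {i : ι} (hw₁ : ∀ k, w₁ k ≠ 0) (hw₂ : 0 ≤ w₂ i) (a : κ → 𝕜) :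
    ‖∑' k, weightConj A w₁ w₂ i k * (a k * w₁ k)‖ = ‖∑' k, A i k * a k‖ * w₂ i := by
  simp only [weightConj_mul_ofReal A (hw₁ _)]
  rw [tsum_mul_right, norm_mul_ofReal_of_nonneg _ hw₂]

theorem weightConj_column_bound {p₀ C : ℝ} (hw₁ : ∀ k, 0 < w₁ k) (hw₂ : ∀ i, 0 ≤ w₂ i) (k : κ)
    (h : Summable (fun i => (w₂ i * ‖A i k‖) ^ p₀) ∧
      ∑' i, (w₂ i * ‖A i k‖) ^ p₀ ≤ C ^ p₀ * w₁ k ^ p₀) :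
    Summable (fun i => ‖weightConj A w₁ w₂ i k‖ ^ p₀) ∧
      ∑' i, ‖weightConj A w₁ w₂ i k‖ ^ p₀ ≤ C ^ p₀ := by
  simp only [norm_weightConj A (fun k => (hw₁ k).le) hw₂,
    Real.div_rpow (mul_nonneg (hw₂ _) (norm_nonneg _)) (hw₁ k).le]
  refine ⟨h.1.div_const _, ?_⟩
  rw [tsum_div_const, div_le_iff₀ (Real.rpow_pos_of_pos (hw₁ k) p₀)]
  exact h.2

theorem weightConj_row_bound {C : ℝ} (hw₁ : ∀ k, 0 ≤ w₁ k) (hw₂ : ∀ i, 0 < w₂ i) (i : ι)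
    (h : Summable (fun k => ‖A i k‖ * (w₁ k)⁻¹) ∧ ∑' k, ‖A i k‖ * (w₁ k)⁻¹ ≤ C * (w₂ i)⁻¹) :
    Summable (fun k => ‖weightConj A w₁ w₂ i k‖) ∧ ∑' k, ‖weightConj A w₁ w₂ i k‖ ≤ C := by
  have heq : (fun k => ‖weightConj A w₁ w₂ i k‖) = fun k => w₂ i * (‖A i k‖ * (w₁ k)⁻¹) := by
    ext k
    rw [norm_weightConj A hw₁ (fun i => (hw₂ i).le)]
    ring
  rw [heq, tsum_mul_left]
  refine ⟨h.1.mul_left _, ?_⟩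
  calc w₂ i * ∑' k, ‖A i k‖ * (w₁ k)⁻¹ ≤ w₂ i * (C * (w₂ i)⁻¹) := by
        gcongr
        · exact (hw₂ i).le
        · exact h.2
    _ = C := by field_simp [(hw₂ i).ne']

theorem summable_norm_mul_ofReal_rpow_iff (hw₁ : ∀ k, 0 ≤ w₁ k) (a : κ → 𝕜) (p : ℝ) :
    Summable (fun k => ‖a k * (w₁ k : 𝕜)‖ ^ p) ↔ Summable (fun k => (‖a k‖ * w₁ k) ^ p) := by
  simp only [norm_mul_ofReal_of_nonneg _ (hw₁ _)]

theorem MapsLpWithBound.of_weightConj {p K : ℝ} (hw₁ : ∀ k, 0 < w₁ k) (hw₂ : ∀ i, 0 < w₂ i)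
    {a : κ → 𝕜} (h : MapsLpWithBound (weightConj A w₁ w₂) p K fun k => a k * w₁ k) :
    (∀ i, Summable fun k => A i k * a k) ∧
      Summable (fun i => (‖∑' k, A i k * a k‖ * w₂ i) ^ p) ∧
      (∑' i, (‖∑' k, A i k * a k‖ * w₂ i) ^ p) ^ (1 / p) ≤
        K * (∑' k, (‖a k‖ * w₁ k) ^ p) ^ (1 / p) := by
  simpa only [MapsLpWithBound, summable_weightConj_mul_iff A (fun k => (hw₁ k).ne') (hw₂ _).ne',
    norm_tsum_weightConj_mul A (fun k => (hw₁ k).ne') (hw₂ _).le,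
    norm_mul_ofReal_of_nonneg _ (hw₁ _).le] using h

theorem summable_mul_and_norm_tsum_mul_le_of_weightConj {C c : ℝ} (hw₁ : ∀ k, 0 < w₁ k)
    {i : ι} (hw₂ : 0 < w₂ i)
    (hrow : Summable (fun k => ‖weightConj A w₁ w₂ i k‖) ∧ ∑' k, ‖weightConj A w₁ w₂ i k‖ ≤ C)
    {a : κ → 𝕜} (hc : 0 ≤ c) (ha : ∀ k, ‖a k‖ * w₁ k ≤ c) :
    (Summable fun k => A i k * a k) ∧ ‖∑' k, A i k * a k‖ * w₂ i ≤ C * c := by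
  have h := summable_mul_and_norm_tsum_le_of_norm_le _ (fun k => a k * (w₁ k : 𝕜)) hrow hc
    fun k => (norm_mul_ofReal_of_nonneg _ (hw₁ k).le).trans_le (ha k)
  rwa [summable_weightConj_mul_iff A (fun k => (hw₁ k).ne') hw₂.ne',
    norm_tsum_weightConj_mul A (fun k => (hw₁ k).ne') hw₂.le] at h

end Weights

/-- Weighted Schur test, part (c): if both Schur conditions
`Σ_λ (w₂(λ)|A_{λ,λ'}|)^{p₀} ≤ C₁^{p₀} w₁(λ')^{p₀}` and
`Σ_{λ'} |A_{λ,λ'}| w₁(λ')⁻¹ ≤ C₂ w₂(λ)⁻¹` hold, then `A` maps `ℓ^p_{w₁}(Λ)`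
boundedly to `ℓ^p_{w₂}(Λ)` for every `p ∈ [p₀,∞]`, with operator norm at most
`C₁^{1/p} C₂^{1/p'}` for `p ∈ [1,∞]` (where `1/p + 1/p' = 1`, `1/∞ = 0`) and at most
`C₁` for `p ∈ (p₀,1]`. -/
theorem stmt_4 {Λ : Type*} (A : Λ → Λ → ℂ) (w₁ w₂ : Λ → ℝ)
    (hw₁ : ∀ l : Λ, 0 < w₁ l) (hw₂ : ∀ l : Λ, 0 < w₂ l)
    (p₀ : ℝ) (hp₀ : 0 < p₀) (hp₀1 : p₀ ≤ 1)
    (C₁ C₂ : ℝ) (hC₁ : 0 < C₁) (hC₂ : 0 < C₂)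
    (hA₁ : ∀ l' : Λ, Summable (fun l : Λ => (w₂ l * ‖A l l'‖) ^ p₀) ∧
      ∑' l : Λ, (w₂ l * ‖A l l'‖) ^ p₀ ≤ C₁ ^ p₀ * w₁ l' ^ p₀)
    (hA₂ : ∀ l : Λ, Summable (fun l' : Λ => ‖A l l'‖ * (w₁ l')⁻¹) ∧
      ∑' l' : Λ, ‖A l l'‖ * (w₁ l')⁻¹ ≤ C₂ * (w₂ l)⁻¹) :
    -- boundedness for all finite `p ∈ [p₀,1]`, with some operator norm bound
    (∀ p : ℝ, p₀ ≤ p → p ≤ 1 → ∃ C : ℝ, ∀ a : Λ → ℂ,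
      Summable (fun l : Λ => (‖a l‖ * w₁ l) ^ p) →
        (∀ l : Λ, Summable (fun l' : Λ => A l l' * a l')) ∧
        Summable (fun l : Λ => (‖∑' l' : Λ, A l l' * a l'‖ * w₂ l) ^ p) ∧
        (∑' l : Λ, (‖∑' l' : Λ, A l l' * a l'‖ * w₂ l) ^ p) ^ (1 / p) ≤
          C * (∑' l : Λ, (‖a l‖ * w₁ l) ^ p) ^ (1 / p)) ∧
    -- operator norm at most `C₁` for `p ∈ (p₀,1]`
    (∀ p : ℝ, p₀ < p → p ≤ 1 → ∀ a : Λ → ℂ,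
      Summable (fun l : Λ => (‖a l‖ * w₁ l) ^ p) →
        (∑' l : Λ, (‖∑' l' : Λ, A l l' * a l'‖ * w₂ l) ^ p) ^ (1 / p) ≤
          C₁ * (∑' l : Λ, (‖a l‖ * w₁ l) ^ p) ^ (1 / p)) ∧
    -- boundedness with norm `C₁^{1/p} C₂^{1/p'}` for finite `p ∈ [1,∞)`
    (∀ p : ℝ, 1 ≤ p → ∀ a : Λ → ℂ,
      Summable (fun l : Λ => (‖a l‖ * w₁ l) ^ p) →
        (∀ l : Λ, Summable (fun l' : Λ => A l l' * a l')) ∧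
        Summable (fun l : Λ => (‖∑' l' : Λ, A l l' * a l'‖ * w₂ l) ^ p) ∧
        (∑' l : Λ, (‖∑' l' : Λ, A l l' * a l'‖ * w₂ l) ^ p) ^ (1 / p) ≤
          C₁ ^ (1 / p) * C₂ ^ (1 - 1 / p) *
            (∑' l : Λ, (‖a l‖ * w₁ l) ^ p) ^ (1 / p)) ∧
    -- the case `p = ∞`, with norm `C₁^0 C₂ = C₂`
    (∀ a : Λ → ℂ, ∀ Ca : ℝ, (∀ l : Λ, ‖a l‖ * w₁ l ≤ Ca) →
      (∀ l : Λ, Summable (fun l' : Λ => A l l' * a l')) ∧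
      ∀ l : Λ, ‖∑' l' : Λ, A l l' * a l'‖ * w₂ l ≤ C₂ * Ca) := by
  have hcol (l' : Λ) := weightConj_column_bound A hw₁ (fun l => (hw₂ l).le) l' (hA₁ l')
  have hrow (l : Λ) := weightConj_row_bound A (fun l' => (hw₁ l').le) hw₂ l (hA₂ l)
  have hcol₁ (l' : Λ) :=
    summable_and_tsum_le_of_tsum_rpow_le (fun _ => norm_nonneg _) hp₀ hp₀1 hC₁.le (hcol l')
  have hx := summable_norm_mul_ofReal_rpow_iff (𝕜 := ℂ) (fun l => (hw₁ l).le)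
  have small (p : ℝ) (hp₀p : p₀ ≤ p) (hp1 : p ≤ 1) (a : Λ → ℂ) ha :=
    (mapsLpWithBound_of_le_one _ hp₀ hp₀p hp1 hC₁.le hcol _
      ((hx a p).2 ha)).of_weightConj A hw₁ hw₂
  refine ⟨fun p hp₀p hp1 => ⟨C₁, small p hp₀p hp1⟩,
    fun p hp₀p hp1 a ha => (small p hp₀p.le hp1 a ha).2.2,
    fun p hp a ha => (mapsLpWithBound_of_one_le _ hp hC₁.le hC₂.le hcol₁ hrow _
      ((hx a p).2 ha)).of_weightConj A hw₁ hw₂,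
    fun a Ca hCa => ?_⟩
  have hrow_top (l : Λ) := summable_mul_and_norm_tsum_mul_le_of_weightConj A hw₁ (hw₂ l) (hrow l)
    ((mul_nonneg (norm_nonneg _) (hw₁ l).le).trans (hCa l)) hCa
  exact ⟨fun l => (hrow_top l).1, fun l => (hrow_top l).2⟩
end

section
/- Let α ∈ [0,1] and let ω_α : P × P → [1,∞) be defined by ω_α(p,p') := M(p,p')·(1 + d_α(p,p')), where M(p,p') = max(s/s', s'/s) and d_α(p,p') = min(s,s')^{2(1−α)}|θ−θ'|² + min(s,s')^{2α}‖x−x'‖² + min(s,s')·|⟨x−x', e_θ⟩|. Then for every discrete subset Λ ⊂ P, the restriction of ω_α to Λ × Λ is an index distance; moreover the constants can be taken C_S ≤ 2 and C_T ≤ 4, i.e. ω_α(p,p) = 1, ω_α(p,p') ≤ 2 ω_α(p',p), and ω_α(p,p') ≤ 4 ω_α(p,p'') ω_α(p'',p') for all p, p', p'' ∈ P. -/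
/-- A point of the parameter space `P = ℝ₊ × S¹ × ℝ²` is encoded as
`(s, θ, x₁, x₂) : ℝ × ℝ × ℝ × ℝ` with `s > 0`. -/
noncomputable def omegaA (α : ℝ) (p q : ℝ × ℝ × ℝ × ℝ) : ℝ :=
  max (p.1 / q.1) (q.1 / p.1) *
    (1 + min p.1 q.1 ^ (2 * (1 - α)) * (p.2.1 - q.2.1) ^ 2 +
      min p.1 q.1 ^ (2 * α) * ((p.2.2.1 - q.2.2.1) ^ 2 + (p.2.2.2 - q.2.2.2) ^ 2) +
      min p.1 q.1 *
        |(p.2.2.1 - q.2.2.1) * Real.cos p.2.1 - (p.2.2.2 - q.2.2.2) * Real.sin p.2.1|)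

private lemma one_le_M {s t : ℝ} (hs : 0 < s) (ht : 0 < t) :
    1 ≤ max (s / t) (t / s) := by
  rcases le_total s t with h | h
  · exact le_max_of_le_right ((one_le_div hs).2 h)
  · exact le_max_of_le_left ((one_le_div ht).2 h)

private lemma M_nonneg {s t : ℝ} (hs : 0 < s) (ht : 0 < t) :
    0 ≤ max (s / t) (t / s) := le_trans zero_le_one (one_le_M hs ht)

private lemma M_submult {s u t : ℝ} (hs : 0 < s) (hu : 0 < u) (ht : 0 < t) :
    max (s / t) (t / s) ≤ max (s / u) (u / s) * max (u / t) (t / u) := by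
  apply max_le
  · have h1 : s / t = (s / u) * (u / t) := by field_simp
    rw [h1]
    exact mul_le_mul (le_max_left _ _) (le_max_left _ _) (by positivity) (M_nonneg hs hu)
  · have h2 : t / s = (u / s) * (t / u) := by field_simp
    rw [h2]
    exact mul_le_mul (le_max_right _ _) (le_max_right _ _) (by positivity) (M_nonneg hs hu)

private lemma rpow_aux {u m β : ℝ} (hu : 0 < u) (hum : u ≤ m) (hβ1 : β ≤ 1) :
    m ^ (2*β) * u^2 ≤ u ^ (2*β) * m^2 := by
  have hm : 0 < m := lt_of_lt_of_le hu hum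
  have h1 : 1 ≤ m / u := (one_le_div hu).2 hum
  have h2 : (m/u) ^ (2*β) ≤ (m/u) ^ (2:ℝ) :=
    Real.rpow_le_rpow_of_exponent_le h1 (by linarith)
  rw [Real.div_rpow hm.le hu.le, Real.div_rpow hm.le hu.le,
    show (2:ℝ) = ((2:ℕ):ℝ) by norm_num, Real.rpow_natCast, Real.rpow_natCast] at h2
  push_cast at h2
  rw [div_le_div_iff₀ (by positivity) (by positivity)] at h2
  linarith

private lemma scale_key {s u t β : ℝ} (hs : 0 < s) (hu : 0 < u) (ht : 0 < t)
    (hβ0 : 0 ≤ β) (hβ1 : β ≤ 1) :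
    max (s/t) (t/s) * min s t ^ (2*β) ≤
      (max (s/u) (u/s) * max (u/t) (t/u)) * min s u ^ (2*β) := by
  rcases le_or_gt u (min s t) with h | h
  · have hus : u ≤ s := h.trans (min_le_left _ _)
    have hut : u ≤ t := h.trans (min_le_right _ _)
    rw [min_eq_right hus]
    have hM1 : max (s/u) (u/s) = s/u :=
      max_eq_left (le_trans ((div_le_one hs).2 hus) ((one_le_div hu).2 hus))
    have hM2 : max (u/t) (t/u) = t/u :=
      max_eq_right (le_trans ((div_le_one ht).2 hut) ((one_le_div hu).2 hut))
    rw [hM1, hM2]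
    rcases le_total s t with hst | hst
    · rw [min_eq_left hst, max_eq_right (le_trans ((div_le_one ht).2 hst) ((one_le_div hs).2 hst))]
      rw [div_mul_eq_mul_div, div_mul_div_comm, div_mul_eq_mul_div,
        div_le_div_iff₀ hs (by positivity)]
      nlinarith [mul_le_mul_of_nonneg_left (rpow_aux hu hus hβ1) ht.le]
    · rw [min_eq_right hst, max_eq_left (le_trans ((div_le_one hs).2 hst) ((one_le_div ht).2 hst))]
      rw [div_mul_eq_mul_div, div_mul_div_comm, div_mul_eq_mul_div,
        div_le_div_iff₀ ht (by positivity)]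
      nlinarith [mul_le_mul_of_nonneg_left (rpow_aux hu hut hβ1) hs.le]
  · have hmin : min s t ≤ min s u := le_min (min_le_left _ _) h.le
    have h2 : min s t ^ (2*β) ≤ min s u ^ (2*β) :=
      Real.rpow_le_rpow (by positivity) hmin (by positivity)
    exact mul_le_mul (M_submult hs hu ht) h2
      (Real.rpow_nonneg (by positivity) _)
      (mul_nonneg (M_nonneg hs hu) (M_nonneg hu ht))

private lemma scale_key' {s u t β : ℝ} (hs : 0 < s) (hu : 0 < u) (ht : 0 < t)
    (hβ0 : 0 ≤ β) (hβ1 : β ≤ 1) :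
    max (s/t) (t/s) * min s t ^ (2*β) ≤
      (max (s/u) (u/s) * max (u/t) (t/u)) * min u t ^ (2*β) := by
  have h := scale_key ht hu hs hβ0 hβ1
  rw [max_comm (t/s), min_comm t s, max_comm (t/u), max_comm (u/s), min_comm t u] at h
  nlinarith [h]

private lemma cos_lip (θ θ' : ℝ) : |Real.cos θ - Real.cos θ'| ≤ |θ - θ'| := by
  rw [Real.cos_sub_cos]
  rw [abs_mul, abs_mul]
  calc |(-2 : ℝ)| * |Real.sin ((θ + θ')/2)| * |Real.sin ((θ - θ')/2)|
      ≤ 2 * 1 * |(θ - θ')/2| := by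
        apply mul_le_mul _ (Real.abs_sin_le_abs) (abs_nonneg _)
        · positivity
        · apply mul_le_mul _ (Real.abs_sin_le_one _) (abs_nonneg _) (by norm_num)
          norm_num
    _ = |θ - θ'| := by rw [abs_div]; norm_num; ring

private lemma sin_lip (θ θ' : ℝ) : |Real.sin θ - Real.sin θ'| ≤ |θ - θ'| := by
  rw [Real.sin_sub_sin]
  rw [abs_mul, abs_mul]
  calc |(2 : ℝ)| * |Real.sin ((θ - θ')/2)| * |Real.cos ((θ + θ')/2)|
      ≤ 2 * |(θ - θ')/2| * 1 := by
        apply mul_le_mul _ (Real.abs_cos_le_one _) (abs_nonneg _)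
        · positivity
        · apply mul_le_mul (by norm_num) (Real.abs_sin_le_abs) (abs_nonneg _) (by norm_num)
    _ = |θ - θ'| := by rw [abs_div]; norm_num; ring

private lemma trig_move (a b θ θ' : ℝ) :
    |a * Real.cos θ - b * Real.sin θ| ≤
      |a * Real.cos θ' - b * Real.sin θ'| + (|a| + |b|) * |θ - θ'| := by
  have hc := cos_lip θ θ'
  have hs := sin_lip θ θ'
  have key : |a * (Real.cos θ - Real.cos θ') - b * (Real.sin θ - Real.sin θ')| ≤
      (|a| + |b|) * |θ - θ'| := by
    calc |a * (Real.cos θ - Real.cos θ') - b * (Real.sin θ - Real.sin θ')|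
        ≤ |a * (Real.cos θ - Real.cos θ')| + |b * (Real.sin θ - Real.sin θ')| :=
          abs_sub _ _
      _ ≤ |a| * |θ - θ'| + |b| * |θ - θ'| := by
          rw [abs_mul, abs_mul]
          have h1 := mul_le_mul_of_nonneg_left hc (abs_nonneg a)
          have h2 := mul_le_mul_of_nonneg_left hs (abs_nonneg b)
          linarith
      _ = (|a| + |b|) * |θ - θ'| := by ring
  calc |a * Real.cos θ - b * Real.sin θ|
      = |(a * Real.cos θ' - b * Real.sin θ') +
          (a * (Real.cos θ - Real.cos θ') - b * (Real.sin θ - Real.sin θ'))| := by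
        ring_nf
    _ ≤ |a * Real.cos θ' - b * Real.sin θ'| +
          |a * (Real.cos θ - Real.cos θ') - b * (Real.sin θ - Real.sin θ')| := abs_add_le _ _
    _ ≤ _ := by linarith [key]

private lemma amgm {m : ℝ} (hm : 0 < m) (α X Y : ℝ) :
    m * (X * Y) ≤ 1/2 * (m ^ (2*(1-α)) * X^2) + 1/2 * (m ^ (2*α) * Y^2) := by
  have hPQ : m ^ (1-α) * m ^ α = m := by
    rw [← Real.rpow_add hm]; norm_num
  have hP2 : m ^ (2*(1-α)) = m ^ (1-α) * m ^ (1-α) := by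
    rw [show (2*(1-α)) = (1-α)+(1-α) by ring, Real.rpow_add hm]
  have hQ2 : m ^ (2*α) = m ^ α * m ^ α := by
    rw [show (2*α) = α+α by ring, Real.rpow_add hm]
  calc m * (X * Y) = (m ^ (1-α) * m ^ α) * (X * Y) := by rw [hPQ]
    _ ≤ 1/2 * (m ^ (2*(1-α)) * X^2) + 1/2 * (m ^ (2*α) * Y^2) := by
        rw [hP2, hQ2]
        nlinarith [sq_nonneg (m ^ (1-α) * X - m ^ α * Y)]


private lemma sym_core {M A B m T X K K' Y W : ℝ}
    (hM : 0 ≤ M) (hm : 0 ≤ m) (hB : 0 ≤ B)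
    (hAT : 0 ≤ A*T) (hBX : 0 ≤ B*X) (hK' : 0 ≤ K')
    (htrig : K ≤ K' + Y*W)
    (ham : m*(W*Y) ≤ 1/2*(A*T) + 1/2*(B*Y^2))
    (hY2 : Y^2 ≤ 2*X) :
    M*(1 + A*T + B*X + m*K) ≤ 2*(M*(1 + A*T + B*X + m*K')) := by
  have h1 := mul_le_mul_of_nonneg_left htrig hm
  have h2 := mul_le_mul_of_nonneg_left hY2 hB
  have hmK' : 0 ≤ m*K' := mul_nonneg hm hK'
  have inner : 1 + A*T + B*X + m*K ≤ 2*(1 + A*T + B*X + m*K') := by linarith [h1, h2, ham]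
  linarith [mul_le_mul_of_nonneg_left inner hM]

set_option maxHeartbeats 1000000 in
private lemma tri_core {M M1 M2 m m1 m2 A A1 A2 B B1 B2 Δ θa θb X Xa Xb c c1 c2 Y W : ℝ}
    (hM : 0 ≤ M) (hM1 : 0 ≤ M1) (hM2 : 0 ≤ M2)
    (hA : 0 ≤ A) (hB : 0 ≤ B) (hm : 0 ≤ m)
    (hθa : 0 ≤ θa) (hθb : 0 ≤ θb) (hXa : 0 ≤ Xa) (hXb : 0 ≤ Xb)
    (hc1 : 0 ≤ c1) (hc2 : 0 ≤ c2)
    (hA1 : 0 ≤ A1) (hB1 : 0 ≤ B1) (hA2 : 0 ≤ A2) (hB2 : 0 ≤ B2)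
    (hm1 : 0 ≤ m1) (hm2 : 0 ≤ m2)
    (T0 : M ≤ M1 * M2)
    (sA1 : M * A ≤ M1 * M2 * A1) (sA2 : M * A ≤ M1 * M2 * A2)
    (sB1 : M * B ≤ M1 * M2 * B1) (sB2 : M * B ≤ M1 * M2 * B2)
    (sm1 : M * m ≤ M1 * M2 * m1) (sm2 : M * m ≤ M1 * M2 * m2)
    (g1 : Δ ≤ 2*θa + 2*θb) (g2 : X ≤ 2*Xa + 2*Xb)
    (hsplit : c ≤ c1 + c2 + Y*W)
    (ham : m * (W * Y) ≤ 1/2*(A*θa) + 1/2*(B*Y^2))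
    (hY2 : Y^2 ≤ 2*Xb) :
    M * (1 + A*Δ + B*X + m*c) ≤
      4 * (M1 * (1 + A1*θa + B1*Xa + m1*c1)) * (M2 * (1 + A2*θb + B2*Xb + m2*c2)) := by
  have t1 : M*(A*Δ) ≤ M1*M2*(2*(A1*θa) + 2*(A2*θb)) := by
    have l1 := mul_le_mul_of_nonneg_left g1 (mul_nonneg hM hA)
    have l2 := mul_le_mul_of_nonneg_right sA1 hθa
    have l3 := mul_le_mul_of_nonneg_right sA2 hθb
    linarith [l1, l2, l3]
  have t2 : M*(B*X) ≤ M1*M2*(2*(B1*Xa) + 2*(B2*Xb)) := by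
    have l1 := mul_le_mul_of_nonneg_left g2 (mul_nonneg hM hB)
    have l2 := mul_le_mul_of_nonneg_right sB1 hXa
    have l3 := mul_le_mul_of_nonneg_right sB2 hXb
    linarith [l1, l2, l3]
  have l0 : m*c ≤ m*c1 + m*c2 + (1/2*(A*θa) + B*Xb) := by
    have u1 := mul_le_mul_of_nonneg_left hsplit hm
    have u2 := mul_le_mul_of_nonneg_left hY2 hB
    linarith [u1, u2, ham]
  have t3 : M*(m*c) ≤ M1*M2*(m1*c1 + m2*c2 + A1*θa + B2*Xb) := by
    have v0 := mul_le_mul_of_nonneg_left l0 hM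
    have v1 := mul_le_mul_of_nonneg_right sm1 hc1
    have v2 := mul_le_mul_of_nonneg_right sm2 hc2
    have v3 := mul_le_mul_of_nonneg_right sA1 hθa
    have v4 := mul_le_mul_of_nonneg_right sB2 hXb
    have w3 : 0 ≤ M1*M2*(A1*θa) :=
      mul_nonneg (mul_nonneg hM1 hM2) (mul_nonneg hA1 hθa)
    linarith [v0, v1, v2, v3, v4, w3]
  have hd1 : 0 ≤ A1*θa + B1*Xa + m1*c1 := by
    have := mul_nonneg hA1 hθa; have := mul_nonneg hB1 hXa; have := mul_nonneg hm1 hc1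
    linarith
  have hd2 : 0 ≤ A2*θb + B2*Xb + m2*c2 := by
    have := mul_nonneg hA2 hθb; have := mul_nonneg hB2 hXb; have := mul_nonneg hm2 hc2
    linarith
  have inner : 1 + (2*(A1*θa) + 2*(A2*θb)) + (2*(B1*Xa) + 2*(B2*Xb))
      + (m1*c1 + m2*c2 + A1*θa + B2*Xb)
      ≤ 4*((1 + A1*θa + B1*Xa + m1*c1) * (1 + A2*θb + B2*Xb + m2*c2)) := by
    have h12 := mul_nonneg hd1 hd2
    have := mul_nonneg hA1 hθa; have := mul_nonneg hB1 hXa; have := mul_nonneg hm1 hc1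
    have := mul_nonneg hA2 hθb; have := mul_nonneg hB2 hXb; have := mul_nonneg hm2 hc2
    linarith [h12]
  have hM12 : 0 ≤ M1*M2 := mul_nonneg hM1 hM2
  have final := mul_le_mul_of_nonneg_left inner hM12
  linarith [T0, t1, t2, t3, final]

set_option maxHeartbeats 1000000 in
/-- `ω_α` is an index distance (on any discrete `Λ ⊂ P`), with constants `C_S ≤ 2`
and `C_T ≤ 4`: it takes values in `[1,∞)`, equals `1` on the diagonal, and satisfies
`ω_α(p,p') ≤ 2 ω_α(p',p)` and `ω_α(p,p') ≤ 4 ω_α(p,p'') ω_α(p'',p')`. -/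
theorem stmt_9 (α : ℝ) (hα : α ∈ Set.Icc (0 : ℝ) 1) :
    (∀ p : ℝ × ℝ × ℝ × ℝ, 0 < p.1 → omegaA α p p = 1) ∧
    (∀ p q : ℝ × ℝ × ℝ × ℝ, 0 < p.1 → 0 < q.1 → 1 ≤ omegaA α p q) ∧
    (∀ p q : ℝ × ℝ × ℝ × ℝ, 0 < p.1 → 0 < q.1 → omegaA α p q ≤ 2 * omegaA α q p) ∧
    (∀ p q r : ℝ × ℝ × ℝ × ℝ, 0 < p.1 → 0 < q.1 → 0 < r.1 →
      omegaA α p q ≤ 4 * omegaA α p r * omegaA α r q) := by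
  obtain ⟨hα0, hα1⟩ := hα
  refine ⟨?_, ?_, ?_, ?_⟩
  -- diagonal
  · rintro ⟨s, θ, x, y⟩ hp
    replace hp : 0 < s := hp
    simp [omegaA, div_self hp.ne']
  -- ≥ 1
  · rintro ⟨s, θ1, x1, y1⟩ ⟨t, θ2, x2, y2⟩ hs ht
    replace hs : 0 < s := hs
    replace ht : 0 < t := ht
    simp only [omegaA]
    have hm : (0:ℝ) < min s t := lt_min hs ht
    have hA : 0 ≤ min s t ^ (2*(1-α)) * (θ1 - θ2)^2 :=
      mul_nonneg (Real.rpow_nonneg hm.le _) (sq_nonneg _)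
    have hB : 0 ≤ min s t ^ (2*α) * ((x1 - x2)^2 + (y1 - y2)^2) :=
      mul_nonneg (Real.rpow_nonneg hm.le _) (by positivity)
    have hC : 0 ≤ min s t * |(x1 - x2) * Real.cos θ1 - (y1 - y2) * Real.sin θ1| :=
      mul_nonneg hm.le (abs_nonneg _)
    calc (1:ℝ) ≤ max (s/t) (t/s) := one_le_M hs ht
      _ = max (s/t) (t/s) * 1 := (mul_one _).symm
      _ ≤ _ := by
          apply mul_le_mul_of_nonneg_left (by linarith) (M_nonneg hs ht)
  -- symmetry
  · rintro ⟨s, θ1, x1, y1⟩ ⟨t, θ2, x2, y2⟩ hs ht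
    replace hs : 0 < s := hs
    replace ht : 0 < t := ht
    simp only [omegaA]
    rw [max_comm (t/s), min_comm t s,
      show (θ2 - θ1)^2 = (θ1 - θ2)^2 by ring,
      show (x2 - x1)^2 + (y2 - y1)^2 = (x1 - x2)^2 + (y1 - y2)^2 by ring,
      show (x2 - x1) * Real.cos θ2 - (y2 - y1) * Real.sin θ2
        = -((x1 - x2) * Real.cos θ2 - (y1 - y2) * Real.sin θ2) by ring,
      abs_neg]
    have hm : (0:ℝ) < min s t := lt_min hs ht
    have ham := amgm hm α (|θ1 - θ2|) (|x1 - x2| + |y1 - y2|)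
    rw [sq_abs] at ham
    have hY2 : (|x1 - x2| + |y1 - y2|)^2 ≤ 2 * ((x1 - x2)^2 + (y1 - y2)^2) := by
      nlinarith [sq_nonneg (|x1 - x2| - |y1 - y2|), sq_abs (x1 - x2), sq_abs (y1 - y2)]
    exact sym_core (M_nonneg hs ht) hm.le (Real.rpow_nonneg hm.le _)
      (mul_nonneg (Real.rpow_nonneg hm.le _) (sq_nonneg _))
      (mul_nonneg (Real.rpow_nonneg hm.le _) (by positivity))
      (abs_nonneg _)
      (trig_move (x1 - x2) (y1 - y2) θ1 θ2) ham hY2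
  -- quasi triangle inequality
  · rintro ⟨s, θ1, x1, y1⟩ ⟨t, θ2, x2, y2⟩ ⟨u, θ3, x3, y3⟩ hs ht hu
    replace hs : 0 < s := hs
    replace ht : 0 < t := ht
    replace hu : 0 < u := hu
    simp only [omegaA]
    have hm : (0:ℝ) < min s t := lt_min hs ht
    have hm1 : (0:ℝ) < min s u := lt_min hs hu
    have hm2 : (0:ℝ) < min u t := lt_min hu ht
    have sk1 := scale_key hs hu ht (by linarith : (0:ℝ) ≤ 1 - α) (by linarith : 1 - α ≤ 1)
    have sk1' := scale_key' hs hu ht (by linarith : (0:ℝ) ≤ 1 - α) (by linarith : 1 - α ≤ 1)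
    have sk2 := scale_key hs hu ht hα0 hα1
    have sk2' := scale_key' hs hu ht hα0 hα1
    have sk3 := scale_key hs hu ht (by norm_num : (0:ℝ) ≤ 1/2) (by norm_num : (1:ℝ)/2 ≤ 1)
    have sk3' := scale_key' hs hu ht (by norm_num : (0:ℝ) ≤ 1/2) (by norm_num : (1:ℝ)/2 ≤ 1)
    rw [show (2 * (1/2 : ℝ)) = 1 by norm_num, Real.rpow_one, Real.rpow_one] at sk3 sk3'
    have g1 : (θ1 - θ2)^2 ≤ 2*(θ1 - θ3)^2 + 2*(θ3 - θ2)^2 := by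
      nlinarith [sq_nonneg (θ1 + θ2 - 2*θ3)]
    have g2 : (x1 - x2)^2 + (y1 - y2)^2
        ≤ 2*((x1 - x3)^2 + (y1 - y3)^2) + 2*((x3 - x2)^2 + (y3 - y2)^2) := by
      nlinarith [sq_nonneg (x1 + x2 - 2*x3), sq_nonneg (y1 + y2 - 2*y3)]
    have hsplit : |(x1 - x2) * Real.cos θ1 - (y1 - y2) * Real.sin θ1|
        ≤ |(x1 - x3) * Real.cos θ1 - (y1 - y3) * Real.sin θ1|
          + |(x3 - x2) * Real.cos θ3 - (y3 - y2) * Real.sin θ3|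
          + (|x3 - x2| + |y3 - y2|) * |θ1 - θ3| := by
      have h0 : |(x1 - x2) * Real.cos θ1 - (y1 - y2) * Real.sin θ1|
          ≤ |(x1 - x3) * Real.cos θ1 - (y1 - y3) * Real.sin θ1|
            + |(x3 - x2) * Real.cos θ1 - (y3 - y2) * Real.sin θ1| := by
        calc |(x1 - x2) * Real.cos θ1 - (y1 - y2) * Real.sin θ1|
            = |((x1 - x3) * Real.cos θ1 - (y1 - y3) * Real.sin θ1)
                + ((x3 - x2) * Real.cos θ1 - (y3 - y2) * Real.sin θ1)| := by ring_nf
          _ ≤ _ := abs_add_le _ _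
      have h1 := trig_move (x3 - x2) (y3 - y2) θ1 θ3
      linarith
    have ham := amgm hm α (|θ1 - θ3|) (|x3 - x2| + |y3 - y2|)
    rw [sq_abs] at ham
    have hY2 : (|x3 - x2| + |y3 - y2|)^2 ≤ 2 * ((x3 - x2)^2 + (y3 - y2)^2) := by
      nlinarith [sq_nonneg (|x3 - x2| - |y3 - y2|), sq_abs (x3 - x2), sq_abs (y3 - y2)]
    exact tri_core (M_nonneg hs ht) (M_nonneg hs hu) (M_nonneg hu ht)
      (Real.rpow_nonneg hm.le _) (Real.rpow_nonneg hm.le _) hm.le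
      (sq_nonneg _) (sq_nonneg _) (by positivity) (by positivity)
      (abs_nonneg _) (abs_nonneg _)
      (Real.rpow_nonneg hm1.le _) (Real.rpow_nonneg hm1.le _)
      (Real.rpow_nonneg hm2.le _) (Real.rpow_nonneg hm2.le _)
      hm1.le hm2.le
      (M_submult hs hu ht)
      sk1 sk1' sk2 sk2' sk3 sk3'
      g1 g2 hsplit ham hY2
end

section
/- Let H be a complex Hilbert space, Λ a countable index set, and (m_λ)_{λ∈Λ} a frame for H with frame constants 0 < a ≤ b < ∞. Let (m̃_λ)_{λ∈Λ} be the canonical dual frame, m̃_λ = S^{-1} m_λ where S is the frame operator Sf = Σ_λ ⟨f, m_λ⟩ m_λ. Then the Moore-Penrose pseudoinverse of the Gramian (⟨m_λ, m_{λ'}⟩)_{λ,λ'∈Λ}, as a bounded operator on ℓ²(Λ), is given by the dual Gramian (⟨m̃_λ, m̃_{λ'}⟩)_{λ,λ'∈Λ}. -/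
/-!
Let `A f = (⟪m λ, f⟫)_λ` be the analysis operator `H → ℓ²(Λ)`, bounded by the upper frame bound.
Then the frame operator is `S = A* A`, the Gramian is `G = A A*`, and since `m̃ λ = S⁻¹ (m λ)`
the dual Gramian is `G̃ = A S⁻² A*`. The lower frame bound makes `S` invertible, and then
`G G̃ = G̃ G = A S⁻¹ A*` is self-adjoint, while `G G̃ G = A (S S⁻² S) A* = G` and likewise
`G̃ G G̃ = G̃`.
-/

open ContinuousLinearMap
open scoped InnerProductSpace lp

section MoorePenrose

variable {𝕜 E F : Type*} [RCLike 𝕜] [NormedAddCommGroup E] [InnerProductSpace 𝕜 E]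
  [NormedAddCommGroup F] [InnerProductSpace 𝕜 F] [CompleteSpace E] [CompleteSpace F]

def IsMoorePenroseInverse (G G' : F →L[𝕜] F) : Prop :=
  G ∘L G' ∘L G = G ∧ G' ∘L G ∘L G' = G' ∧
    IsSelfAdjoint (G ∘L G') ∧ IsSelfAdjoint (G' ∘L G)

theorem isSelfAdjoint_adjoint_comp_self (A : E →L[𝕜] F) : IsSelfAdjoint (adjoint A ∘L A) := by
  rw [isSelfAdjoint_iff', adjoint_comp, adjoint_adjoint]

theorem isMoorePenroseInverse_comp_adjoint (A : E →L[𝕜] F) (hA : IsUnit (adjoint A ∘L A)) :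
    IsMoorePenroseInverse (A ∘L adjoint A)
      (A ∘L (Ring.inverse (adjoint A ∘L A) ∘L Ring.inverse (adjoint A ∘L A)) ∘L adjoint A) := by
  set P := Ring.inverse (adjoint A ∘L A)
  have hSP (x : E) : adjoint A (A (P x)) = x :=
    congr($(Ring.mul_inverse_cancel _ hA) x)
  have hPS (x : E) : P (adjoint A (A x)) = x :=
    congr($(Ring.inverse_mul_cancel _ hA) x)
  have hP : IsSelfAdjoint P := (isSelfAdjoint_adjoint_comp_self A).ringInverse
  have hGGt : (A ∘L adjoint A) ∘L A ∘L (P ∘L P) ∘L adjoint A = A ∘L P ∘L adjoint A := by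
    ext x; simp [hSP]
  have hGtG : (A ∘L (P ∘L P) ∘L adjoint A) ∘L A ∘L adjoint A = A ∘L P ∘L adjoint A := by
    ext x; simp [hPS]
  refine ⟨?_, ?_, ?_, ?_⟩
  · ext x; simp [hSP, hPS]
  · ext x; simp [hSP]
  · exact hGGt ▸ hP.conj_adjoint A
  · exact hGtG ▸ hP.conj_adjoint A

theorem isUnit_adjoint_comp_self_of_le_norm_sq (A : E →L[𝕜] F) {c : ℝ} (hc : 0 < c)
    (h : ∀ x, c * ‖x‖ ^ 2 ≤ ‖A x‖ ^ 2) : IsUnit (adjoint A ∘L A) :=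
  isUnit_of_forall_le_norm_inner_map _ (Real.toNNReal_pos.mpr hc) fun x => by
    rw [Real.coe_toNNReal _ hc.le, mul_comm]
    simpa [adjoint_inner_left] using h x

end MoorePenrose

section AnalysisOperator

variable {𝕜 H Λ : Type*} [RCLike 𝕜] [NormedAddCommGroup H] [InnerProductSpace 𝕜 H]
  {m : Λ → H}

theorem memℓp_inner_of_summable {f : H} (hf : Summable fun l => ‖⟪f, m l⟫_𝕜‖ ^ 2) :
    Memℓp (fun l => ⟪m l, f⟫_𝕜) 2 :=
  memℓp_gen (by simpa [norm_inner_symm] using hf)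

theorem lp.norm_sq_eq_tsum (c : ℓ²(Λ, 𝕜)) : ‖c‖ ^ 2 = ∑' l, ‖c l‖ ^ 2 := by
  simpa using lp.norm_rpow_eq_tsum (p := 2) (by norm_num) c

variable (m) in
noncomputable def analysisOp (hsum : ∀ f : H, Summable fun l => ‖⟪f, m l⟫_𝕜‖ ^ 2) {B : ℝ}
    (hB : ∀ f : H, ∑' l, ‖⟪f, m l⟫_𝕜‖ ^ 2 ≤ B * ‖f‖ ^ 2) : H →L[𝕜] ℓ²(Λ, 𝕜) :=
  LinearMap.mkContinuous
    { toFun f := ⟨fun l => ⟪m l, f⟫_𝕜, memℓp_inner_of_summable (hsum f)⟩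
      map_add' f g := lp.ext <| funext fun l => inner_add_right _ _ _
      map_smul' c f := lp.ext <| funext fun l => inner_smul_right _ _ _ }
    √B fun f => by
      calc _ ≤ √(B * ‖f‖ ^ 2) :=
            Real.le_sqrt_of_sq_le (by simpa [lp.norm_sq_eq_tsum, norm_inner_symm] using hB f)
        _ = √B * ‖f‖ := by rw [Real.sqrt_mul' _ (sq_nonneg _), Real.sqrt_sq (norm_nonneg f)]

@[simp]
theorem analysisOp_apply (hsum : ∀ f : H, Summable fun l => ‖⟪f, m l⟫_𝕜‖ ^ 2) {B : ℝ}
    (hB : ∀ f : H, ∑' l, ‖⟪f, m l⟫_𝕜‖ ^ 2 ≤ B * ‖f‖ ^ 2) (f : H) (l : Λ) :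
    analysisOp m hsum hB f l = ⟪m l, f⟫_𝕜 :=
  rfl

variable (hsum : ∀ f : H, Summable fun l => ‖⟪f, m l⟫_𝕜‖ ^ 2) {B : ℝ}
    (hB : ∀ f : H, ∑' l, ‖⟪f, m l⟫_𝕜‖ ^ 2 ≤ B * ‖f‖ ^ 2)

theorem norm_analysisOp_sq (f : H) :
    ‖analysisOp m hsum hB f‖ ^ 2 = ∑' l, ‖⟪f, m l⟫_𝕜‖ ^ 2 := by
  simp [lp.norm_sq_eq_tsum, norm_inner_symm]

variable [CompleteSpace H]

theorem inner_adjoint_analysisOp (g : H) (c : ℓ²(Λ, 𝕜)) :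
    ⟪g, adjoint (analysisOp m hsum hB) c⟫_𝕜 = ∑' l, c l * ⟪g, m l⟫_𝕜 := by
  simp [adjoint_inner_right, lp.inner_eq_tsum, mul_comm]

theorem adjoint_analysisOp_comp_analysisOp {S : H →L[𝕜] H}
    (hS : ∀ f, HasSum (fun l => ⟪m l, f⟫_𝕜 • m l) (S f)) :
    adjoint (analysisOp m hsum hB) ∘L analysisOp m hsum hB = S := by
  ext f
  refine ext_inner_left 𝕜 fun g => ?_
  rw [comp_apply, inner_adjoint_analysisOp]
  simpa [inner_smul_right] using ((innerSL 𝕜 g).hasSum (hS f)).tsum_eq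

theorem analysisOp_comp_comp_adjoint_apply (T : H →L[𝕜] H) (c : ℓ²(Λ, 𝕜)) (l : Λ) :
    (analysisOp m hsum hB ∘L T ∘L adjoint (analysisOp m hsum hB)) c l =
      ∑' l', ⟪m l, T (m l')⟫_𝕜 * c l' := by
  rw [comp_apply, comp_apply, analysisOp_apply, ← adjoint_inner_left, inner_adjoint_analysisOp]
  simp [adjoint_inner_left, mul_comm]

end AnalysisOperator

theorem stmt_13_general {H : Type*} [NormedAddCommGroup H] [InnerProductSpace ℂ H]
    [CompleteSpace H] {Λ : Type*}
    (m mt : Λ → H) (a b : ℝ) (ha : 0 < a)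
    (hsum : ∀ f : H, Summable (fun l : Λ => ‖(inner ℂ f (m l) : ℂ)‖ ^ 2))
    (hframe : ∀ f : H,
      a ^ 2 * ‖f‖ ^ 2 ≤ ∑' l : Λ, ‖(inner ℂ f (m l) : ℂ)‖ ^ 2 ∧
      ∑' l : Λ, ‖(inner ℂ f (m l) : ℂ)‖ ^ 2 ≤ b ^ 2 * ‖f‖ ^ 2)
    (S : H →L[ℂ] H)
    (hS : ∀ f : H, HasSum (fun l : Λ => (inner ℂ (m l) f : ℂ) • m l) (S f))
    (hmt : ∀ l : Λ, S (mt l) = m l)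
    (G Gt : lp (fun _ : Λ => ℂ) 2 →L[ℂ] lp (fun _ : Λ => ℂ) 2)
    (hG : ∀ (c : lp (fun _ : Λ => ℂ) 2) (l : Λ),
      G c l = ∑' l' : Λ, (inner ℂ (m l) (m l') : ℂ) * c l')
    (hGt : ∀ (c : lp (fun _ : Λ => ℂ) 2) (l : Λ),
      Gt c l = ∑' l' : Λ, (inner ℂ (mt l) (mt l') : ℂ) * c l') :
    G ∘L Gt ∘L G = G ∧ Gt ∘L G ∘L Gt = Gt ∧
      IsSelfAdjoint (G ∘L Gt) ∧ IsSelfAdjoint (Gt ∘L G) := by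
  set A := analysisOp m hsum fun f => (hframe f).2
  have hSA : adjoint A ∘L A = S := adjoint_analysisOp_comp_analysisOp hsum _ hS
  have hunit : IsUnit (adjoint A ∘L A) :=
    isUnit_adjoint_comp_self_of_le_norm_sq A (pow_pos ha 2) fun f => by
      rw [norm_analysisOp_sq]
      exact (hframe f).1
  set P := Ring.inverse (adjoint A ∘L A)
  have hP : IsSelfAdjoint P := (isSelfAdjoint_adjoint_comp_self A).ringInverse
  have hmtP (l : Λ) : mt l = P (m l) := by
    rw [← hmt, ← hSA]
    exact congr($(Ring.inverse_mul_cancel _ hunit) (mt l)).symm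
  have hGA : G = A ∘L adjoint A := by
    ext c l
    simpa using (hG c l).trans (analysisOp_comp_comp_adjoint_apply hsum _ (.id ℂ H) c l).symm
  have hGtA : Gt = A ∘L (P ∘L P) ∘L adjoint A := by
    ext c l
    rw [hGt, analysisOp_comp_comp_adjoint_apply hsum _ (P ∘L P)]
    refine tsum_congr fun l' => ?_
    rw [hmtP l, hmtP l', comp_apply, ← adjoint_inner_right P, hP.adjoint_eq]
  rw [hGA, hGtA]
  exact isMoorePenroseInverse_comp_adjoint A hunit

/-- Pseudoinverse of the Gramian (part of Lemma 3.8): let `(m_λ)_{λ∈Λ}` be a frame for a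
complex Hilbert space `H` with frame constants `0 < a ≤ b`, `S` its frame operator
`Sf = Σ_λ ⟨f, m_λ⟩ m_λ`, and `m̃_λ = S⁻¹ m_λ` the canonical dual frame.  Then the
Moore–Penrose pseudoinverse of the Gramian `G = (⟨m_λ, m_{λ'}⟩)`, as a bounded operator
on `ℓ²(Λ)`, is the dual Gramian `G̃ = (⟨m̃_λ, m̃_{λ'}⟩)`; that is, `G G̃ G = G`,
`G̃ G G̃ = G̃`, and `G G̃`, `G̃ G` are self-adjoint. -/
theorem stmt_13 {H : Type*} [NormedAddCommGroup H] [InnerProductSpace ℂ H]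
    [CompleteSpace H] {Λ : Type*} [Countable Λ]
    (m mt : Λ → H) (a b : ℝ) (ha : 0 < a) (hab : a ≤ b)
    (hsum : ∀ f : H, Summable (fun l : Λ => ‖(inner ℂ f (m l) : ℂ)‖ ^ 2))
    (hframe : ∀ f : H,
      a ^ 2 * ‖f‖ ^ 2 ≤ ∑' l : Λ, ‖(inner ℂ f (m l) : ℂ)‖ ^ 2 ∧
      ∑' l : Λ, ‖(inner ℂ f (m l) : ℂ)‖ ^ 2 ≤ b ^ 2 * ‖f‖ ^ 2)
    (S : H →L[ℂ] H)
    (hS : ∀ f : H, HasSum (fun l : Λ => (inner ℂ (m l) f : ℂ) • m l) (S f))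
    (hmt : ∀ l : Λ, S (mt l) = m l)
    (G Gt : lp (fun _ : Λ => ℂ) 2 →L[ℂ] lp (fun _ : Λ => ℂ) 2)
    (hG : ∀ (c : lp (fun _ : Λ => ℂ) 2) (l : Λ),
      G c l = ∑' l' : Λ, (inner ℂ (m l) (m l') : ℂ) * c l')
    (hGt : ∀ (c : lp (fun _ : Λ => ℂ) 2) (l : Λ),
      Gt c l = ∑' l' : Λ, (inner ℂ (mt l) (mt l') : ℂ) * c l') :
    G ∘L Gt ∘L G = G ∧ Gt ∘L G ∘L Gt = Gt ∧
      IsSelfAdjoint (G ∘L Gt) ∧ IsSelfAdjoint (Gt ∘L G) :=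
  stmt_13_general m mt a b ha hsum hframe S hS hmt G Gt hG hGt
end

section
/- Let α ∈ [0,1], g > 1, τ > 0, and let (γ_j)_{j∈ℕ}, (L_j)_{j∈ℕ} be sequences of positive real numbers with c·g^{-j(1-α)} ≤ γ_j ≤ C'·g^{-j(1-α)} for constants C', c > 0, and L_j ≲ g^{j(1-α)}. Let Λ^c_α = { (j,l,k) ∈ ℕ × ℤ × ℤ² : |l| ≤ L_j } with the α-curvelet parametrization Φ^c(λ) = (s_λ, θ_λ, x_λ) = (g^j, lγ_j, R_{θ_λ}^{-1} D_{s_λ}^{-1} τk). Then Λ^c_α is separated by ω_α with separation constant C_{Λ^c_α} = min{ g, 1 + c₀², 1 + τ², 1 + τ }, where c₀ = inf_{λ∈Λ^c_α} γ_j g^{j(1-α)}; that is, ω_α(Φ^c(λ), Φ^c(λ')) ≥ min{ g, 1 + c₀², 1 + τ², 1 + τ } > 1 for all λ ≠ λ' in Λ^c_α. -/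
noncomputable def PhiC (α g τ : ℝ) (γ : ℕ → ℝ) (t : ℕ × ℤ × ℤ × ℤ) : ℝ × ℝ × ℝ × ℝ :=
  let θ : ℝ := (t.2.1 : ℝ) * γ t.1
  let u : ℝ := τ * (t.2.2.1 : ℝ) / g ^ (t.1 : ℝ)
  let v : ℝ := τ * (t.2.2.2 : ℝ) / g ^ ((t.1 : ℝ) * α)
  (g ^ (t.1 : ℝ), θ, Real.cos θ * u + Real.sin θ * v, -Real.sin θ * u + Real.cos θ * v)

set_option maxHeartbeats 1000000 in
/-- Separation of the `α`-curvelet parametrization: the index set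
`Λ^c_α = {(j,l,k) : |l| ≤ L_j}` is separated by `ω_α` with separation constant
`min{g, 1 + c₀², 1 + τ², 1 + τ}`, where `c₀ = inf γ_j g^{j(1−α)}`. -/
theorem stmt_14 (α g τ : ℝ) (hα : α ∈ Set.Icc (0 : ℝ) 1) (hg : 1 < g) (hτ : 0 < τ)
    (γ Lseq : ℕ → ℝ) (c C' : ℝ) (hc : 0 < c) (hC' : 0 < C')
    (hγ : ∀ j : ℕ, c * g ^ (-(j : ℝ) * (1 - α)) ≤ γ j ∧
      γ j ≤ C' * g ^ (-(j : ℝ) * (1 - α)))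
    (hLpos : ∀ j : ℕ, 0 < Lseq j)
    (hLle : ∃ CL : ℝ, ∀ j : ℕ, Lseq j ≤ CL * g ^ ((j : ℝ) * (1 - α)))
    (c₀ : ℝ) (hc₀pos : 0 < c₀)
    (hc₀ : ∀ j : ℕ, c₀ ≤ γ j * g ^ ((j : ℝ) * (1 - α))) :
    (∀ lam lam' : {t : ℕ × ℤ × ℤ × ℤ // (|t.2.1| : ℝ) ≤ Lseq t.1}, lam ≠ lam' →
      min g (min (1 + c₀ ^ 2) (min (1 + τ ^ 2) (1 + τ))) ≤
        omegaA α (PhiC α g τ γ lam.1) (PhiC α g τ γ lam'.1)) ∧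
    1 < min g (min (1 + c₀ ^ 2) (min (1 + τ ^ 2) (1 + τ))) := by
  obtain ⟨hα0, hα1⟩ := hα
  have hg0 : (0:ℝ) < g := lt_trans one_pos hg
  have hSpos : ∀ x : ℝ, 0 < g ^ x := fun x => Real.rpow_pos_of_pos hg0 _
  have hsq : ∀ j : ℕ, ∀ b : ℝ, (g ^ (j:ℝ)) ^ (2*b) = (g ^ ((j:ℝ)*b))^2 := by
    intro j b
    rw [← Real.rpow_natCast (g ^ ((j:ℝ)*b)) 2, ← Real.rpow_mul hg0.le, ← Real.rpow_mul hg0.le]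
    congr 1
    push_cast
    ring
  have castabs : ∀ a b : ℤ, a ≠ b → (1:ℝ) ≤ |(a:ℝ) - b| := by
    intro a b hab
    have h1 : (1:ℤ) ≤ |a - b| := Int.one_le_abs (sub_ne_zero.mpr hab)
    calc (1:ℝ) ≤ |((a - b : ℤ) : ℝ)| := by exact_mod_cast h1
      _ = |(a:ℝ) - b| := by push_cast; ring_nf
  have castsq : ∀ a b : ℤ, a ≠ b → (1:ℝ) ≤ ((a:ℝ) - b)^2 := by
    intro a b hab
    have h2 := castabs a b hab
    nlinarith [sq_abs ((a:ℝ) - b), abs_nonneg ((a:ℝ) - b)]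
  constructor
  · rintro ⟨⟨j,l,k1,k2⟩,hl⟩ ⟨⟨j',l',k1',k2'⟩,hl'⟩ hne
    simp only [ne_eq, Subtype.mk.injEq, Prod.mk.injEq] at hne
    simp only [omegaA, PhiC]
    by_cases hj : j = j'
    · subst hj
      have hne' : ¬(l = l' ∧ k1 = k1' ∧ k2 = k2') := fun h => hne ⟨rfl, h⟩
      rw [div_self (ne_of_gt (hSpos _)), max_self, min_self, one_mul]
      by_cases hll : l = l'
      · subst hll
        have hnk : ¬(k1 = k1' ∧ k2 = k2') := fun h => hne' ⟨rfl, h⟩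
        set θ : ℝ := (l:ℝ) * γ j with hθ
        set S : ℝ := g ^ (j:ℝ) with hS
        set G : ℝ := g ^ ((j:ℝ)*α) with hG
        have hSp : 0 < S := hSpos _
        have hGp : 0 < G := hSpos _
        have hA0 : S ^ (2*(1-α)) * (θ - θ)^2 = 0 := by simp
        have hSG : S ^ (2*α) = G^2 := hsq j α
        have e1 : (Real.cos θ * (τ * ↑k1 / S) + Real.sin θ * (τ * ↑k2 / G) -
              (Real.cos θ * (τ * ↑k1' / S) + Real.sin θ * (τ * ↑k2' / G)))^2 +
            (-Real.sin θ * (τ * ↑k1 / S) + Real.cos θ * (τ * ↑k2 / G) -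
              (-Real.sin θ * (τ * ↑k1' / S) + Real.cos θ * (τ * ↑k2' / G)))^2 =
            (τ * ((k1:ℝ) - k1') / S)^2 + (τ * ((k2:ℝ) - k2') / G)^2 := by
          linear_combination ((τ * ((k1:ℝ) - k1') / S)^2 + (τ * ((k2:ℝ) - k2') / G)^2) *
            Real.sin_sq_add_cos_sq θ
        have e2 : (Real.cos θ * (τ * ↑k1 / S) + Real.sin θ * (τ * ↑k2 / G) -
              (Real.cos θ * (τ * ↑k1' / S) + Real.sin θ * (τ * ↑k2' / G))) * Real.cos θ -
            (-Real.sin θ * (τ * ↑k1 / S) + Real.cos θ * (τ * ↑k2 / G) -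
              (-Real.sin θ * (τ * ↑k1' / S) + Real.cos θ * (τ * ↑k2' / G))) * Real.sin θ =
            τ * ((k1:ℝ) - k1') / S := by
          linear_combination (τ * ((k1:ℝ) - k1') / S) * Real.sin_sq_add_cos_sq θ
        have habs : S * |τ * ((k1:ℝ) - k1') / S| = τ * |(k1:ℝ) - k1'| := by
          rw [abs_div, abs_of_pos hSp, abs_mul, abs_of_pos hτ]
          field_simp
        by_cases hk2 : k2 = k2'
        · -- use 1 + τ
          have hk1 : k1 ≠ k1' := fun h => hnk ⟨h, hk2⟩
          have hΔ1 := castabs k1 k1' hk1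
          refine le_trans ((min_le_right _ _).trans ((min_le_right _ _).trans
            (min_le_right _ _))) ?_
          rw [hA0, hSG, e1, e2]
          have hBpos : 0 ≤ G^2 * ((τ * ((k1:ℝ) - k1') / S)^2 + (τ * ((k2:ℝ) - k2') / G)^2) := by
            positivity
          nlinarith [habs, mul_le_mul_of_nonneg_left hΔ1 hτ.le]
        · -- use 1 + τ²
          have hΔ2 := castsq k2 k2' hk2
          refine le_trans ((min_le_right _ _).trans ((min_le_right _ _).trans
            (min_le_left _ _))) ?_
          rw [hA0, hSG, e1, e2]
          have h2 : G^2 * (τ * ((k2:ℝ) - k2') / G)^2 = (τ * ((k2:ℝ) - k2'))^2 := by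
            field_simp
          have h3 : τ^2 ≤ (τ * ((k2:ℝ) - k2'))^2 := by nlinarith [hΔ2, sq_nonneg τ]
          rw [mul_add, h2]
          linarith [h3, mul_nonneg (sq_nonneg G) (sq_nonneg (τ * ((k1:ℝ) - k1') / S)),
            mul_nonneg hSp.le (abs_nonneg (τ * ((k1:ℝ) - k1') / S))]
      · -- l ≠ l' : use 1 + c₀²
        set S : ℝ := g ^ (j:ℝ) with hS
        have hSp : 0 < S := hSpos _
        have hE2 : S ^ (2*(1-α)) = (g ^ ((j:ℝ)*(1-α)))^2 := hsq j (1-α)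
        set E : ℝ := g ^ ((j:ℝ)*(1-α)) with hE
        have hΔl := castsq l l' hll
        have hA : c₀^2 ≤ S ^ (2*(1-α)) * ((l:ℝ) * γ j - (l':ℝ) * γ j)^2 := by
          rw [hE2]
          have h1 : c₀^2 ≤ (γ j * E)^2 := pow_le_pow_left₀ hc₀pos.le (hc₀ j) 2
          have h2 : (γ j * E)^2 * 1 ≤ (γ j * E)^2 * (((l:ℝ) - l')^2) :=
            mul_le_mul_of_nonneg_left hΔl (sq_nonneg _)
          calc c₀^2 ≤ (γ j * E)^2 * 1 := by linarith
            _ ≤ (γ j * E)^2 * (((l:ℝ) - l')^2) := h2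
            _ = E^2 * ((l:ℝ) * γ j - (l':ℝ) * γ j)^2 := by ring
        refine le_trans ((min_le_right _ _).trans (min_le_left _ _)) ?_
        conv_lhs => rw [show (1:ℝ) + c₀^2 = 1 + c₀^2 + 0 + 0 from by ring]
        gcongr
        · exact mul_nonneg (Real.rpow_nonneg hSp.le _)
            (add_nonneg (sq_nonneg _) (sq_nonneg _))
        · exact mul_nonneg hSp.le (abs_nonneg _)
    · -- j ≠ j' : use g
      have hmax : g ≤ max (g ^ (j:ℝ) / g ^ (j':ℝ)) (g ^ (j':ℝ) / g ^ (j:ℝ)) := by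
        rcases lt_or_gt_of_ne hj with h | h
        · refine le_max_of_le_right ?_
          rw [← Real.rpow_sub hg0]
          calc g = g ^ (1:ℝ) := (Real.rpow_one g).symm
            _ ≤ g ^ ((j':ℝ) - j) := Real.rpow_le_rpow_of_exponent_le hg.le (by
                have : (j:ℝ) + 1 ≤ j' := by exact_mod_cast h
                linarith)
        · refine le_max_of_le_left ?_
          rw [← Real.rpow_sub hg0]
          calc g = g ^ (1:ℝ) := (Real.rpow_one g).symm
            _ ≤ g ^ ((j:ℝ) - j') := Real.rpow_le_rpow_of_exponent_le hg.le (by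
                have : (j':ℝ) + 1 ≤ j := by exact_mod_cast h
                linarith)
      have hminp : (0:ℝ) < min (g ^ (j:ℝ)) (g ^ (j':ℝ)) := lt_min (hSpos _) (hSpos _)
      have hmaxpos : (0:ℝ) < max (g ^ (j:ℝ) / g ^ (j':ℝ)) (g ^ (j':ℝ) / g ^ (j:ℝ)) :=
        lt_of_lt_of_le hg0 hmax
      refine le_trans (min_le_left _ _) (hmax.trans ?_)
      refine le_mul_of_one_le_right hmaxpos.le ?_
      conv_lhs => rw [show (1:ℝ) = 1 + 0 + 0 + 0 from by ring]
      gcongr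
      · exact mul_nonneg (Real.rpow_nonneg hminp.le _) (sq_nonneg _)
      · exact mul_nonneg (Real.rpow_nonneg hminp.le _)
          (add_nonneg (sq_nonneg _) (sq_nonneg _))
      · exact mul_nonneg hminp.le (abs_nonneg _)
  · simp only [lt_min_iff]
    exact ⟨hg, by nlinarith, by nlinarith, by linarith⟩
end

section
/- Let α ∈ [0,1], g > 1, τ > 0, and let (η_j)_{j∈ℤ}, (L_j)_{j∈ℤ} be sequences of positive reals with η_j ≍ g^{-j(1-α)} and L_j ≲ g^{j(1-α)}. Let Λ^s_α = { (j,l,k) ∈ ℤ × ℤ × ℤ² : |l| ≤ L_j } with the α-shearlet parametrization Φ^s(j,l,k) = (s_λ, θ_λ, x_λ) = (g^j, arctan(lη_j), S_{tan θ_λ}^{-1} D_{s_λ}^{-1} τk). Then Λ^s_α is separated by ω_α with separation constant C_{Λ^s_α} = min{ g, 1 + c²(1+C²)^{-2}, 1 + τ², 1 + τ(1+C²)^{-1/2} }, where c = inf_{λ∈Λ^s_α} η_j g^{j(1-α)} and C = sup_{j∈ℤ} L_j η_j; that is, ω_α(Φ^s(λ), Φ^s(λ')) ≥ C_{Λ^s_α}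 > 1 for all λ ≠ λ' in Λ^s_α. -/
set_option maxHeartbeats 1000000

lemma arctan_sub_lb {C a b : ℝ} (ha : |a| ≤ C) (hb : |b| ≤ C) (hab : b < a) :
    (a - b) / (1 + C ^ 2) ≤ Real.arctan a - Real.arctan b := by
  obtain ⟨ξ, hξ, hslope⟩ := exists_hasDerivAt_eq_slope Real.arctan (fun x => 1 / (1 + x ^ 2))
    hab Real.continuous_arctan.continuousOn (fun x _ => Real.hasDerivAt_arctan x)
  have hξC : ξ ^ 2 ≤ C ^ 2 := by
    have h1 : -C ≤ b := neg_le_of_abs_le hb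
    have h2 : a ≤ C := le_of_abs_le ha
    nlinarith [hξ.1, hξ.2]
  have h0 : 0 < 1 + ξ ^ 2 := by positivity
  have hC0 : 0 < 1 + C ^ 2 := by positivity
  have hab' : 0 < a - b := sub_pos.mpr hab
  have key : (Real.arctan a - Real.arctan b) * (1 + ξ ^ 2) = a - b := by
    have := (div_eq_iff hab'.ne').mp hslope.symm
    field_simp at this ⊢
    nlinarith [this]
  have hmono : 0 ≤ Real.arctan a - Real.arctan b :=
    sub_nonneg.mpr (Real.arctan_strictMono.monotone hab.le)
  rw [div_le_iff₀ hC0]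
  nlinarith [key, hξC, hmono]

lemma arctan_sq_lb {C a b : ℝ} (ha : |a| ≤ C) (hb : |b| ≤ C) :
    (a - b) ^ 2 / (1 + C ^ 2) ^ 2 ≤ (Real.arctan a - Real.arctan b) ^ 2 := by
  have hC0 : (0:ℝ) < 1 + C ^ 2 := by positivity
  rcases lt_trichotomy a b with h | h | h
  · have := arctan_sub_lb hb ha h
    have h0 : 0 ≤ (b - a) / (1 + C ^ 2) := by
      apply div_nonneg (by linarith) hC0.le
    calc (a - b) ^ 2 / (1 + C ^ 2) ^ 2 = ((b - a) / (1 + C ^ 2)) ^ 2 := by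
          rw [div_pow]; ring_nf
      _ ≤ (Real.arctan b - Real.arctan a) ^ 2 := by
          apply pow_le_pow_left₀ h0 this
      _ = (Real.arctan a - Real.arctan b) ^ 2 := by ring
  · simp [h]
  · have := arctan_sub_lb ha hb h
    have h0 : 0 ≤ (a - b) / (1 + C ^ 2) := by
      apply div_nonneg (by linarith) hC0.le
    calc (a - b) ^ 2 / (1 + C ^ 2) ^ 2 = ((a - b) / (1 + C ^ 2)) ^ 2 := by rw [div_pow]
      _ ≤ (Real.arctan a - Real.arctan b) ^ 2 := pow_le_pow_left₀ h0 this 2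

lemma rpow_helper {g : ℝ} (hg : 0 < g) (x y : ℝ) :
    (g ^ x) ^ (2 * y) = (g ^ (x * y)) ^ (2 : ℕ) := by
  rw [← Real.rpow_natCast (g ^ (x * y)) 2, ← Real.rpow_mul hg.le, ← Real.rpow_mul hg.le]
  congr 1
  push_cast
  ring



/-- The `α`-shearlet parametrization
`Φ^s(j,l,k) = (g^j, arctan(lη_j), S_{tan θ_λ}⁻¹ D_{g^j}⁻¹ τk)`, where `D_s = diag(s, s^α)`
and `S_t = [[1,t],[0,1]]` is the shear matrix. -/
noncomputable def PhiS (α g τ : ℝ) (η : ℤ → ℝ) (t : ℤ × ℤ × ℤ × ℤ) : ℝ × ℝ × ℝ × ℝ :=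
  let u : ℝ := τ * (t.2.2.1 : ℝ) / g ^ (t.1 : ℝ)
  let v : ℝ := τ * (t.2.2.2 : ℝ) / g ^ ((t.1 : ℝ) * α)
  (g ^ (t.1 : ℝ), Real.arctan ((t.2.1 : ℝ) * η t.1), u - (t.2.1 : ℝ) * η t.1 * v, v)

/-- Separation of the `α`-shearlet parametrization: the index set
`Λ^s_α = {(j,l,k) ∈ ℤ × ℤ × ℤ² : |l| ≤ L_j}` is separated by `ω_α` with separation
constant `min{g, 1 + c²(1+C²)⁻², 1 + τ², 1 + τ(1+C²)^{-1/2}}`, where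
`c = inf η_j g^{j(1−α)}` and `C = sup L_j η_j`. -/
theorem stmt_17 (α g τ : ℝ) (hα : α ∈ Set.Icc (0 : ℝ) 1) (hg : 1 < g) (hτ : 0 < τ)
    (η Lseq : ℤ → ℝ) (c₁ C₁' : ℝ) (hc₁ : 0 < c₁) (hC₁' : 0 < C₁')
    (hη : ∀ j : ℤ, c₁ * g ^ (-(j : ℝ) * (1 - α)) ≤ η j ∧
      η j ≤ C₁' * g ^ (-(j : ℝ) * (1 - α)))
    (hLpos : ∀ j : ℤ, 0 < Lseq j)
    (hLle : ∃ CL : ℝ, ∀ j : ℤ, Lseq j ≤ CL * g ^ ((j : ℝ) * (1 - α)))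
    (c : ℝ) (hcpos : 0 < c) (hcinf : ∀ j : ℤ, c ≤ η j * g ^ ((j : ℝ) * (1 - α)))
    (C : ℝ) (hCsup : ∀ j : ℤ, Lseq j * η j ≤ C) :
    (∀ lam lam' : {t : ℤ × ℤ × ℤ × ℤ // (|t.2.1| : ℝ) ≤ Lseq t.1}, lam ≠ lam' →
      min g (min (1 + c ^ 2 * ((1 + C ^ 2) ^ 2)⁻¹)
          (min (1 + τ ^ 2) (1 + τ * (Real.sqrt (1 + C ^ 2))⁻¹))) ≤
        omegaA α (PhiS α g τ η lam.1) (PhiS α g τ η lam'.1)) ∧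
    1 < min g (min (1 + c ^ 2 * ((1 + C ^ 2) ^ 2)⁻¹)
        (min (1 + τ ^ 2) (1 + τ * (Real.sqrt (1 + C ^ 2))⁻¹))) := by
  have hg0 : (0:ℝ) < g := lt_trans one_pos hg
  have hC0 : (0:ℝ) < 1 + C ^ 2 := by positivity
  have hKg : 1 < min g (min (1 + c ^ 2 * ((1 + C ^ 2) ^ 2)⁻¹)
      (min (1 + τ ^ 2) (1 + τ * (Real.sqrt (1 + C ^ 2))⁻¹))) := by
    have h1 : (0:ℝ) < c ^ 2 * ((1 + C ^ 2) ^ 2)⁻¹ := by positivity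
    have h2 : (0:ℝ) < τ * (Real.sqrt (1 + C ^ 2))⁻¹ := by positivity
    have h3 : (0:ℝ) < τ ^ 2 := by positivity
    simp only [lt_min_iff]
    refine ⟨hg, by linarith, by linarith, by linarith⟩
  have hK2 : min g (min (1 + c ^ 2 * ((1 + C ^ 2) ^ 2)⁻¹)
      (min (1 + τ ^ 2) (1 + τ * (Real.sqrt (1 + C ^ 2))⁻¹))) ≤
      1 + c ^ 2 * ((1 + C ^ 2) ^ 2)⁻¹ := (min_le_right _ _).trans (min_le_left _ _)
  have hK3 : min g (min (1 + c ^ 2 * ((1 + C ^ 2) ^ 2)⁻¹)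
      (min (1 + τ ^ 2) (1 + τ * (Real.sqrt (1 + C ^ 2))⁻¹))) ≤ 1 + τ ^ 2 :=
    (min_le_right _ _).trans ((min_le_right _ _).trans (min_le_left _ _))
  have hK4 : min g (min (1 + c ^ 2 * ((1 + C ^ 2) ^ 2)⁻¹)
      (min (1 + τ ^ 2) (1 + τ * (Real.sqrt (1 + C ^ 2))⁻¹))) ≤
      1 + τ * (Real.sqrt (1 + C ^ 2))⁻¹ :=
    (min_le_right _ _).trans ((min_le_right _ _).trans (min_le_right _ _))
  refine ⟨?_, hKg⟩
  rintro ⟨⟨j, l, k₁, k₂⟩, hl⟩ ⟨⟨j', l', k₁', k₂'⟩, hl'⟩ hne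
  simp only [ne_eq, Subtype.mk.injEq, Prod.mk.injEq, not_and] at hne
  have ηpos : ∀ i : ℤ, 0 < η i := fun i =>
    lt_of_lt_of_le (by positivity) (hη i).1
  have sp : ∀ i : ℤ, (0:ℝ) < g ^ (i:ℝ) := fun i => Real.rpow_pos_of_pos hg0 _
  push_cast at hl hl'
  simp only [omegaA, PhiS] at hl hl' ⊢
  by_cases hjj : j = j'
  · subst hjj
    rw [div_self (sp j).ne', max_self, min_self, one_mul]
    have haC : |(l:ℝ) * η j| ≤ C := by
      calc |(l:ℝ) * η j| = |(l:ℝ)| * η j := by rw [abs_mul, abs_of_pos (ηpos j)]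
        _ ≤ Lseq j * η j := mul_le_mul_of_nonneg_right hl (ηpos j).le
        _ ≤ C := hCsup j
    by_cases hll : l = l'
    · subst hll
      by_cases hkk2 : k₂ = k₂'
      · -- k₁ ≠ k₁'
        subst hkk2
        have hkk1 : k₁ ≠ k₁' := fun h => hne rfl rfl h rfl
        have e1 : τ * (k₁:ℝ) / g ^ (j:ℝ) - (l:ℝ) * η j * (τ * (k₂:ℝ) / g ^ ((j:ℝ) * α)) -
            (τ * (k₁':ℝ) / g ^ (j:ℝ) - (l:ℝ) * η j * (τ * (k₂:ℝ) / g ^ ((j:ℝ) * α))) =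
            τ * ((k₁:ℝ) - (k₁':ℝ)) / g ^ (j:ℝ) := by ring
        have e2 : τ * (k₂:ℝ) / g ^ ((j:ℝ) * α) - τ * (k₂:ℝ) / g ^ ((j:ℝ) * α) = 0 :=
          sub_self _
        rw [e1, e2]
        have hcosnn : (0:ℝ) < Real.cos (Real.arctan ((l:ℝ) * η j)) :=
          Real.cos_arctan_pos _
        have hcos : (Real.sqrt (1 + C ^ 2))⁻¹ ≤ Real.cos (Real.arctan ((l:ℝ) * η j)) := by
          rw [Real.cos_arctan, one_div]
          have hle : 1 + ((l:ℝ) * η j) ^ 2 ≤ 1 + C ^ 2 := by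
            nlinarith [sq_abs ((l:ℝ) * η j), sq_le_sq' (neg_le_of_abs_le haC) (le_of_abs_le haC)]
          exact inv_anti₀ (Real.sqrt_pos.mpr (by positivity)) (Real.sqrt_le_sqrt hle)
        have hk1 : (1:ℝ) ≤ |(k₁:ℝ) - (k₁':ℝ)| := by
          have h1 : (1:ℤ) ≤ |k₁ - k₁'| := Int.one_le_abs (sub_ne_zero.mpr hkk1)
          have h2 : ((|k₁ - k₁'| : ℤ) : ℝ) = |(k₁:ℝ) - (k₁':ℝ)| := by push_cast; ring_nf
          rw [← h2]; exact_mod_cast h1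
        have hT : τ * (Real.sqrt (1 + C ^ 2))⁻¹ ≤ g ^ (j:ℝ) *
            |τ * ((k₁:ℝ) - (k₁':ℝ)) / g ^ (j:ℝ) * Real.cos (Real.arctan ((l:ℝ) * η j)) -
              0 * Real.sin (Real.arctan ((l:ℝ) * η j))| := by
          rw [zero_mul, sub_zero, abs_mul, abs_of_pos hcosnn, abs_div,
            abs_of_pos (sp j), abs_mul, abs_of_pos hτ]
          have heq : g ^ (j:ℝ) * (τ * |(k₁:ℝ) - (k₁':ℝ)| / g ^ (j:ℝ) *
              Real.cos (Real.arctan ((l:ℝ) * η j))) =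
              τ * |(k₁:ℝ) - (k₁':ℝ)| * Real.cos (Real.arctan ((l:ℝ) * η j)) := by
            field_simp
          rw [heq]
          have hinv : (0:ℝ) ≤ (Real.sqrt (1 + C ^ 2))⁻¹ := by positivity
          nlinarith [mul_le_mul_of_nonneg_left hcos hτ.le,
            mul_nonneg (mul_nonneg hτ.le (by linarith : (0:ℝ) ≤ |(k₁:ℝ) - (k₁':ℝ)| - 1)) hcosnn.le]
        have hA : (0:ℝ) ≤ (g ^ (j:ℝ)) ^ (2 * (1 - α)) *
            (Real.arctan ((l:ℝ) * η j) - Real.arctan ((l:ℝ) * η j)) ^ 2 := by positivity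
        have hB : (0:ℝ) ≤ (g ^ (j:ℝ)) ^ (2 * α) *
            ((τ * ((k₁:ℝ) - (k₁':ℝ)) / g ^ (j:ℝ)) ^ 2 + 0 ^ 2) := by positivity
        linarith [hK4, hT, hA, hB]
      · -- k₂ ≠ k₂'
        have hk2 : (1:ℝ) ≤ |(k₂:ℝ) - (k₂':ℝ)| := by
          have h1 : (1:ℤ) ≤ |k₂ - k₂'| := Int.one_le_abs (sub_ne_zero.mpr hkk2)
          have h2 : ((|k₂ - k₂'| : ℤ) : ℝ) = |(k₂:ℝ) - (k₂':ℝ)| := by push_cast; ring_nf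
          rw [← h2]; exact_mod_cast h1
        have hq : (0:ℝ) < g ^ ((j:ℝ) * α) := Real.rpow_pos_of_pos hg0 _
        have hB : τ ^ 2 ≤ (g ^ (j:ℝ)) ^ (2 * α) *
            ((τ * (k₁:ℝ) / g ^ (j:ℝ) - (l:ℝ) * η j * (τ * (k₂:ℝ) / g ^ ((j:ℝ) * α)) -
              (τ * (k₁':ℝ) / g ^ (j:ℝ) - (l:ℝ) * η j * (τ * (k₂':ℝ) / g ^ ((j:ℝ) * α)))) ^ 2 +
             (τ * (k₂:ℝ) / g ^ ((j:ℝ) * α) - τ * (k₂':ℝ) / g ^ ((j:ℝ) * α)) ^ 2) := by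
          rw [rpow_helper hg0]
          have hqv : g ^ ((j:ℝ) * α) * (τ * (k₂:ℝ) / g ^ ((j:ℝ) * α) -
              τ * (k₂':ℝ) / g ^ ((j:ℝ) * α)) = τ * ((k₂:ℝ) - (k₂':ℝ)) := by
            field_simp
          have hΔ1 : (1:ℝ) ≤ ((k₂:ℝ) - (k₂':ℝ)) ^ 2 := by
            nlinarith [hk2, abs_nonneg ((k₂:ℝ) - (k₂':ℝ)), sq_abs ((k₂:ℝ) - (k₂':ℝ))]
          have h1 : τ ^ 2 ≤ (τ * ((k₂:ℝ) - (k₂':ℝ))) ^ 2 := by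
            nlinarith [sq_nonneg τ]
          calc τ ^ 2 ≤ (τ * ((k₂:ℝ) - (k₂':ℝ))) ^ 2 := h1
            _ = (g ^ ((j:ℝ) * α)) ^ 2 * (τ * (k₂:ℝ) / g ^ ((j:ℝ) * α) -
                τ * (k₂':ℝ) / g ^ ((j:ℝ) * α)) ^ 2 := by rw [← hqv]; ring
            _ ≤ _ := by
                nlinarith [mul_nonneg (sq_nonneg (g ^ ((j:ℝ) * α)))
                  (sq_nonneg (τ * (k₁:ℝ) / g ^ (j:ℝ) -
                    (l:ℝ) * η j * (τ * (k₂:ℝ) / g ^ ((j:ℝ) * α)) -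
                    (τ * (k₁':ℝ) / g ^ (j:ℝ) - (l:ℝ) * η j * (τ * (k₂':ℝ) / g ^ ((j:ℝ) * α)))))]
        have hA : (0:ℝ) ≤ (g ^ (j:ℝ)) ^ (2 * (1 - α)) *
            (Real.arctan ((l:ℝ) * η j) - Real.arctan ((l:ℝ) * η j)) ^ 2 := by positivity
        have hT : (0:ℝ) ≤ g ^ (j:ℝ) *
            |(τ * (k₁:ℝ) / g ^ (j:ℝ) - (l:ℝ) * η j * (τ * (k₂:ℝ) / g ^ ((j:ℝ) * α)) -
              (τ * (k₁':ℝ) / g ^ (j:ℝ) - (l:ℝ) * η j * (τ * (k₂':ℝ) / g ^ ((j:ℝ) * α)))) *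
              Real.cos (Real.arctan ((l:ℝ) * η j)) -
             (τ * (k₂:ℝ) / g ^ ((j:ℝ) * α) - τ * (k₂':ℝ) / g ^ ((j:ℝ) * α)) *
              Real.sin (Real.arctan ((l:ℝ) * η j))| := by positivity
        linarith [hK3, hA, hB, hT]
    · -- l ≠ l'
      have hbC : |(l':ℝ) * η j| ≤ C := by
        calc |(l':ℝ) * η j| = |(l':ℝ)| * η j := by rw [abs_mul, abs_of_pos (ηpos j)]
          _ ≤ Lseq j * η j := mul_le_mul_of_nonneg_right hl' (ηpos j).le
          _ ≤ C := hCsup j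
      have harc := arctan_sq_lb haC hbC
      have hld : (1:ℝ) ≤ |(l:ℝ) - (l':ℝ)| := by
        have h1 : (1:ℤ) ≤ |l - l'| := Int.one_le_abs (sub_ne_zero.mpr hll)
        have h2 : ((|l - l'| : ℤ) : ℝ) = |(l:ℝ) - (l':ℝ)| := by push_cast; ring_nf
        rw [← h2]; exact_mod_cast h1
      have hll2 : (η j) ^ 2 ≤ ((l:ℝ) * η j - (l':ℝ) * η j) ^ 2 := by
        have h1 : (1:ℝ) ≤ ((l:ℝ) - (l':ℝ)) ^ 2 := by
          nlinarith [hld, abs_nonneg ((l:ℝ) - (l':ℝ)), sq_abs ((l:ℝ) - (l':ℝ))]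
        nlinarith [sq_nonneg (η j)]
      have hw : (0:ℝ) < g ^ ((j:ℝ) * (1 - α)) := Real.rpow_pos_of_pos hg0 _
      have hc2 : c ^ 2 ≤ (η j) ^ 2 * (g ^ ((j:ℝ) * (1 - α))) ^ 2 := by
        have := hcinf j
        nlinarith [hcpos, ηpos j, hw]
      have hA : c ^ 2 * ((1 + C ^ 2) ^ 2)⁻¹ ≤ (g ^ (j:ℝ)) ^ (2 * (1 - α)) *
          (Real.arctan ((l:ℝ) * η j) - Real.arctan ((l':ℝ) * η j)) ^ 2 := by
        rw [rpow_helper hg0]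
        calc c ^ 2 * ((1 + C ^ 2) ^ 2)⁻¹
            ≤ (η j) ^ 2 * (g ^ ((j:ℝ) * (1 - α))) ^ 2 * ((1 + C ^ 2) ^ 2)⁻¹ := by
              gcongr
          _ = (g ^ ((j:ℝ) * (1 - α))) ^ 2 * ((η j) ^ 2 / (1 + C ^ 2) ^ 2) := by
              rw [div_eq_mul_inv]; ring
          _ ≤ (g ^ ((j:ℝ) * (1 - α))) ^ 2 *
              (((l:ℝ) * η j - (l':ℝ) * η j) ^ 2 / (1 + C ^ 2) ^ 2) := by
              gcongr
          _ ≤ (g ^ ((j:ℝ) * (1 - α))) ^ 2 *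
              (Real.arctan ((l:ℝ) * η j) - Real.arctan ((l':ℝ) * η j)) ^ 2 := by
              exact mul_le_mul_of_nonneg_left harc (by positivity)
      have hB : (0:ℝ) ≤ (g ^ (j:ℝ)) ^ (2 * α) *
          ((τ * (k₁:ℝ) / g ^ (j:ℝ) - (l:ℝ) * η j * (τ * (k₂:ℝ) / g ^ ((j:ℝ) * α)) -
            (τ * (k₁':ℝ) / g ^ (j:ℝ) - (l':ℝ) * η j * (τ * (k₂':ℝ) / g ^ ((j:ℝ) * α)))) ^ 2 +
           (τ * (k₂:ℝ) / g ^ ((j:ℝ) * α) - τ * (k₂':ℝ) / g ^ ((j:ℝ) * α)) ^ 2) := by positivity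
      have hT : (0:ℝ) ≤ g ^ (j:ℝ) *
          |(τ * (k₁:ℝ) / g ^ (j:ℝ) - (l:ℝ) * η j * (τ * (k₂:ℝ) / g ^ ((j:ℝ) * α)) -
            (τ * (k₁':ℝ) / g ^ (j:ℝ) - (l':ℝ) * η j * (τ * (k₂':ℝ) / g ^ ((j:ℝ) * α)))) *
            Real.cos (Real.arctan ((l:ℝ) * η j)) -
           (τ * (k₂:ℝ) / g ^ ((j:ℝ) * α) - τ * (k₂':ℝ) / g ^ ((j:ℝ) * α)) *
            Real.sin (Real.arctan ((l:ℝ) * η j))| := by positivity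
      linarith [hK2, hA, hB, hT]
  · -- different scales
    have hM : g ≤ max (g ^ (j:ℝ) / g ^ (j':ℝ)) (g ^ (j':ℝ) / g ^ (j:ℝ)) := by
      rcases Ne.lt_or_gt hjj with h | h
      · refine le_max_of_le_right ?_
        have hcast : (1:ℝ) ≤ (j':ℝ) - (j:ℝ) := by
          have : j + 1 ≤ j' := Int.lt_iff_add_one_le.mp h
          have : ((j:ℝ) + 1) ≤ (j':ℝ) := by exact_mod_cast this
          linarith
        calc g = g ^ (1:ℝ) := (Real.rpow_one g).symm
          _ ≤ g ^ ((j':ℝ) - (j:ℝ)) := (Real.rpow_le_rpow_left_iff hg).mpr hcast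
          _ = g ^ (j':ℝ) / g ^ (j:ℝ) := Real.rpow_sub hg0 _ _
      · refine le_max_of_le_left ?_
        have hcast : (1:ℝ) ≤ (j:ℝ) - (j':ℝ) := by
          have : j' + 1 ≤ j := Int.lt_iff_add_one_le.mp h
          have : ((j':ℝ) + 1) ≤ (j:ℝ) := by exact_mod_cast this
          linarith
        calc g = g ^ (1:ℝ) := (Real.rpow_one g).symm
          _ ≤ g ^ ((j:ℝ) - (j':ℝ)) := (Real.rpow_le_rpow_left_iff hg).mpr hcast
          _ = g ^ (j:ℝ) / g ^ (j':ℝ) := Real.rpow_sub hg0 _ _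
    have hmin : (0:ℝ) < min (g ^ (j:ℝ)) (g ^ (j':ℝ)) := lt_min (sp j) (sp j')
    have hd : (0:ℝ) ≤
        min (g ^ (j:ℝ)) (g ^ (j':ℝ)) ^ (2 * (1 - α)) *
          (Real.arctan ((l:ℝ) * η j) - Real.arctan ((l':ℝ) * η j')) ^ 2 +
        min (g ^ (j:ℝ)) (g ^ (j':ℝ)) ^ (2 * α) *
          ((τ * (k₁:ℝ) / g ^ (j:ℝ) - (l:ℝ) * η j * (τ * (k₂:ℝ) / g ^ ((j:ℝ) * α)) -
            (τ * (k₁':ℝ) / g ^ (j':ℝ) - (l':ℝ) * η j' * (τ * (k₂':ℝ) / g ^ ((j':ℝ) * α)))) ^ 2 +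
           (τ * (k₂:ℝ) / g ^ ((j:ℝ) * α) - τ * (k₂':ℝ) / g ^ ((j':ℝ) * α)) ^ 2) +
        min (g ^ (j:ℝ)) (g ^ (j':ℝ)) *
          |(τ * (k₁:ℝ) / g ^ (j:ℝ) - (l:ℝ) * η j * (τ * (k₂:ℝ) / g ^ ((j:ℝ) * α)) -
            (τ * (k₁':ℝ) / g ^ (j':ℝ) - (l':ℝ) * η j' * (τ * (k₂':ℝ) / g ^ ((j':ℝ) * α)))) *
            Real.cos (Real.arctan ((l:ℝ) * η j)) -
           (τ * (k₂:ℝ) / g ^ ((j:ℝ) * α) - τ * (k₂':ℝ) / g ^ ((j':ℝ) * α)) *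
            Real.sin (Real.arctan ((l:ℝ) * η j))| := by positivity
    calc min g (min (1 + c ^ 2 * ((1 + C ^ 2) ^ 2)⁻¹)
          (min (1 + τ ^ 2) (1 + τ * (Real.sqrt (1 + C ^ 2))⁻¹))) ≤ g := min_le_left _ _
      _ ≤ max (g ^ (j:ℝ) / g ^ (j':ℝ)) (g ^ (j':ℝ) / g ^ (j:ℝ)) := hM
      _ = max (g ^ (j:ℝ) / g ^ (j':ℝ)) (g ^ (j':ℝ) / g ^ (j:ℝ)) * 1 := (mul_one _).symm
      _ ≤ _ := by
          apply mul_le_mul_of_nonneg_left (by linarith) (le_trans hg0.le hM)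
end
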